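/- arXiv:0906.2579 — 6 statements merged into one kernel-verified Lean document; each statement's English description precedes it below -/
import Mathlib

section
/- Let P be a finite graded shellable poset and let a ⪯ b be elements of P. Then each of the induced subposets [a,b] = {z : a ⪯ z ⪯ b}, [a,b) = {z : a ⪯ z ≺ b}, (a,b] = {z : a ≺ z ⪯ b}, and (a,b) = {z : a ≺ z ≺ b} is shellable. -/
variable {α : Type*}

/-- The closed interval of the subposet `S` (for the order relation `le`)
between `a` and `b`. -/
def orderInterval (le : α → α → Prop) (S : Set α) (a b : α) : Set α :=
  {z | z ∈ S ∧ le a z ∧ le z b}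
/-- A finset is a chain of the subposet `S` for the order relation `le`. -/
def IsChainFinsetIn (le : α → α → Prop) (S : Set α) (C : Finset α) : Prop :=
  (↑C : Set α) ⊆ S ∧ ∀ u ∈ C, ∀ v ∈ C, u ≠ v → (le u v ∨ le v u)

/-- A maximal chain of the subposet `S`: a chain of `S` which is not properly
contained in any other chain of `S`. -/
def IsMaxChainFinsetIn (le : α → α → Prop) (S : Set α) (C : Finset α) : Prop :=
  IsChainFinsetIn le S C ∧
    ∀ C' : Finset α, IsChainFinsetIn le S C' → C ⊆ C' → C' = C

/-- The subposet `S` is graded: in every closed interval all maximal chains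
have the same length (cardinality). -/
def IsGradedIn (le : α → α → Prop) (S : Set α) : Prop :=
  ∀ a ∈ S, ∀ b ∈ S, le a b → ∀ C₁ C₂ : Finset α,
    IsMaxChainFinsetIn le (orderInterval le S a b) C₁ →
    IsMaxChainFinsetIn le (orderInterval le S a b) C₂ → C₁.card = C₂.card

/-- `r` is a shelling order on the maximal chains of the subposet `S`: a strict
linear order on maximal chains such that whenever `m₁ < m₂`, there exist a maximal
chain `m₃ < m₂` and an element `x ∈ m₂` with `m₁ ∩ m₂ ⊆ m₃ ∩ m₂ = m₂ \ {x}`. -/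
def IsShellingOrder [DecidableEq α] (le : α → α → Prop) (S : Set α)
    (r : Finset α → Finset α → Prop) : Prop :=
  (∀ C, IsMaxChainFinsetIn le S C → ¬r C C) ∧
  (∀ C₁ C₂ C₃, IsMaxChainFinsetIn le S C₁ → IsMaxChainFinsetIn le S C₂ →
    IsMaxChainFinsetIn le S C₃ → r C₁ C₂ → r C₂ C₃ → r C₁ C₃) ∧
  (∀ C₁ C₂, IsMaxChainFinsetIn le S C₁ → IsMaxChainFinsetIn le S C₂ → C₁ ≠ C₂ →
    r C₁ C₂ ∨ r C₂ C₁) ∧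
  (∀ m₁ m₂, IsMaxChainFinsetIn le S m₁ → IsMaxChainFinsetIn le S m₂ → r m₁ m₂ →
    ∃ m₃, IsMaxChainFinsetIn le S m₃ ∧ r m₃ m₂ ∧
      ∃ x ∈ m₂, m₁ ∩ m₂ ⊆ m₃ ∩ m₂ ∧ m₃ ∩ m₂ = m₂.erase x)

/-- The subposet `S` is shellable. -/
def IsShellableIn [DecidableEq α] (le : α → α → Prop) (S : Set α) : Prop :=
  ∃ r : Finset α → Finset α → Prop, IsShellingOrder le S r

/-!
Order the maximal chains of a subposet `T ⊆ S` by their `r`-least extensions to maximal chains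
of `S`. If `m₃` performs a shelling step between two such extensions, then its trace on `T`
performs the corresponding step in `T`: by minimality of the extensions, the element that `m₃`
drops lies in `T`. For `T = [a, b]` the traces involved are maximal chains of `T` because all
the chains pass through `a` and `b`; removing an endpoint, which is comparable with everything,
then gives the half-open and open intervals.
-/

namespace IsChainFinsetIn

variable {le : α → α → Prop} {S T : Set α} {c m : Finset α}

theorem filter_mem (hm : IsChainFinsetIn le S m) [DecidablePred (· ∈ T)] :
    IsChainFinsetIn le T (m.filter (· ∈ T)) :=
  ⟨fun _ h => (Finset.mem_filter.1 h).2, fun u hu v hv =>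
    hm.2 u (Finset.mem_of_mem_filter u hu) v (Finset.mem_of_mem_filter v hv)⟩

theorem exists_isMaxChainFinsetIn_superset [Finite α] (hc : IsChainFinsetIn le S c) :
    ∃ m, IsMaxChainFinsetIn le S m ∧ c ⊆ m := by
  obtain ⟨m, hcm, hm⟩ := Finite.exists_le_maximal (p := IsChainFinsetIn le S) hc
  exact ⟨m, ⟨hm.prop, fun C hC hmC => (hm.le_of_ge hC hmC).antisymm hmC⟩, hcm⟩

end IsChainFinsetIn

namespace IsMaxChainFinsetIn

variable {le : α → α → Prop} {S T : Set α} {c m : Finset α}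

theorem filter_mem_eq_of_subset [DecidablePred (· ∈ T)] (hc : IsMaxChainFinsetIn le T c)
    (hm : IsChainFinsetIn le S m) (hcm : c ⊆ m) : m.filter (· ∈ T) = c :=
  hc.2 _ hm.filter_mem fun _ hz => Finset.mem_filter.2 ⟨hcm hz, hc.1.1 hz⟩

theorem mem_of_forall_comparable [DecidableEq α] {t : α} (hm : IsMaxChainFinsetIn le S m)
    (ht : t ∈ S) (hcomp : ∀ z ∈ m, z ≠ t → le z t ∨ le t z) : t ∈ m := by
  have hchain : IsChainFinsetIn le S (insert t m) := by
    refine ⟨by simpa [Set.insert_subset_iff] using ⟨ht, hm.1.1⟩, ?_⟩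
    simp only [Finset.mem_insert]
    rintro u (rfl | hu) v (rfl | hv) huv
    · exact absurd rfl huv
    · exact (hcomp v hv (Ne.symm huv)).symm
    · exact hcomp u hu huv
    · exact hm.1.2 u hu v hv huv
  exact hm.2 _ hchain (Finset.subset_insert t m) ▸ Finset.mem_insert_self t m

theorem filter_mem [DecidableEq α] [DecidablePred (· ∈ T)] (hm : IsMaxChainFinsetIn le S m)
    (hTS : T ⊆ S) (hcomp : ∀ w ∈ m, w ∉ T → ∀ z ∈ T, le z w ∨ le w z) :
    IsMaxChainFinsetIn le T (m.filter (· ∈ T)) := by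
  refine ⟨hm.1.filter_mem, fun C hC hsub => ?_⟩
  refine (Finset.Subset.antisymm hsub fun z hz => Finset.mem_filter.2 ⟨?_, hC.1 hz⟩).symm
  refine hm.mem_of_forall_comparable (hTS (hC.1 hz)) fun w hw hwz => ?_
  by_cases hwT : w ∈ T
  · exact hC.2 w (hsub (Finset.mem_filter.2 ⟨hw, hwT⟩)) z hz hwz
  · exact (hcomp w hw hwT z (hC.1 hz)).symm

end IsMaxChainFinsetIn

namespace IsShellingOrder

variable [DecidableEq α] {le : α → α → Prop} {S T : Set α} {r : Finset α → Finset α → Prop}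

theorem exists_minimal [Finite α] (hr : IsShellingOrder le S r) {p : Finset α → Prop}
    (hp : ∀ m, p m → IsMaxChainFinsetIn le S m) (hne : ∃ m, p m) :
    ∃ m, p m ∧ ∀ m', p m' → ¬r m' m := by
  let r' m m' := IsMaxChainFinsetIn le S m ∧ IsMaxChainFinsetIn le S m' ∧ r m m'
  have : IsTrans (Finset α) r' :=
    ⟨fun _ _ _ h₁ h₂ => ⟨h₁.1, h₂.2.1, hr.2.1 _ _ _ h₁.1 h₁.2.1 h₂.2.1 h₁.2.2 h₂.2.2⟩⟩
  have : Std.Irrefl r' := ⟨fun m h => hr.1 m h.1 h.2.2⟩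
  obtain ⟨m, hm, hmin⟩ := (Finite.wellFounded_of_trans_of_irrefl r').has_min {m | p m} hne
  exact ⟨m, hm, fun m' hm' h => hmin m' hm' ⟨hp m' hm', hp m hm, h⟩⟩

theorem rel_of_not_rel_of_rel (hr : IsShellingOrder le S r) {m₁ m₂ m₃ : Finset α}
    (h₁ : IsMaxChainFinsetIn le S m₁) (h₂ : IsMaxChainFinsetIn le S m₂)
    (h₃ : IsMaxChainFinsetIn le S m₃) (h₂₁ : ¬r m₂ m₁) (h₂₃ : r m₂ m₃) : r m₁ m₃ := by
  rcases eq_or_ne m₁ m₂ with rfl | hne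
  · exact h₂₃
  · exact hr.2.1 _ _ _ h₁ h₂ h₃ ((hr.2.2.1 _ _ h₁ h₂ hne).resolve_right h₂₁) h₂₃

theorem isShellableIn_of_subset [Finite α] [DecidablePred (· ∈ T)]
    (hr : IsShellingOrder le S r) (hTS : T ⊆ S)
    (htrace : ∀ c₁ c₂ m, IsMaxChainFinsetIn le T c₁ → IsMaxChainFinsetIn le T c₂ →
      IsMaxChainFinsetIn le S m → c₁ ∩ c₂ ⊆ m → IsMaxChainFinsetIn le T (m.filter (· ∈ T))) :
    IsShellableIn le T := by
  have hlift (c) (hc : IsMaxChainFinsetIn le T c) : ∃ m, (IsMaxChainFinsetIn le S m ∧ c ⊆ m) ∧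
      ∀ m', IsMaxChainFinsetIn le S m' ∧ c ⊆ m' → ¬r m' m :=
    hr.exists_minimal (fun _ h => h.1)
      (IsChainFinsetIn.exists_isMaxChainFinsetIn_superset ⟨hc.1.1.trans hTS, hc.1.2⟩)
  choose! f hf hfmin using hlift
  have htr (c) (hc : IsMaxChainFinsetIn le T c) : (f c).filter (· ∈ T) = c :=
    hc.filter_mem_eq_of_subset (hf c hc).1.1 (hf c hc).2
  refine ⟨fun c c' => r (f c) (f c'), fun c hc => hr.1 _ (hf c hc).1,
    fun c₁ c₂ c₃ h₁ h₂ h₃ => hr.2.1 _ _ _ (hf c₁ h₁).1 (hf c₂ h₂).1 (hf c₃ h₃).1,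
    fun c₁ c₂ h₁ h₂ hne => hr.2.2.1 _ _ (hf c₁ h₁).1 (hf c₂ h₂).1
      fun h => hne (by rw [← htr c₁ h₁, ← htr c₂ h₂, h]), ?_⟩
  intro c₁ c₂ h₁ h₂ h₁₂
  obtain ⟨m₃, hm₃, hr₃, x, hx, hsub, heq⟩ := hr.2.2.2 _ _ (hf c₁ h₁).1 (hf c₂ h₂).1 h₁₂
  have hinter : c₁ ∩ c₂ ⊆ (m₃ ∩ f c₂).filter (· ∈ T) :=
    calc c₁ ∩ c₂ = (f c₁ ∩ f c₂).filter (· ∈ T) := by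
          rw [Finset.filter_inter_distrib, htr c₁ h₁, htr c₂ h₂]
      _ ⊆ (m₃ ∩ f c₂).filter (· ∈ T) := Finset.filter_subset_filter _ hsub
  have herase : (m₃ ∩ f c₂).filter (· ∈ T) = c₂.erase x := by
    rw [heq, Finset.filter_erase, htr c₂ h₂]
  set c₃ := m₃.filter (· ∈ T)
  have hc₃ : c₃ ∩ c₂ = c₂.erase x := by rw [← herase, Finset.filter_inter_distrib, htr c₂ h₂]
  -- otherwise `m₃ ⊇ c₂` would precede the least extension `f c₂` of `c₂`
  have hxT : x ∈ T := by
    by_contra hxT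
    refine hfmin c₂ h₂ m₃ ⟨hm₃, ?_⟩ hr₃
    calc c₂ = (m₃ ∩ f c₂).filter (· ∈ T) := by
          rw [herase, Finset.erase_eq_of_notMem fun h => hxT (h₂.1.1 h)]
      _ ⊆ m₃ := (Finset.filter_subset _ _).trans Finset.inter_subset_left
  have hmax₃ : IsMaxChainFinsetIn le T c₃ :=
    htrace c₁ c₂ m₃ h₁ h₂ hm₃ (hinter.trans ((Finset.filter_subset _ _).trans
      Finset.inter_subset_left))
  refine ⟨c₃, hmax₃, ?_, x, htr c₂ h₂ ▸ Finset.mem_filter.2 ⟨hx, hxT⟩, hc₃ ▸ herase ▸ hinter, hc₃⟩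
  exact hr.rel_of_not_rel_of_rel (hf c₃ hmax₃).1 hm₃ (hf c₂ h₂).1
    (hfmin c₃ hmax₃ m₃ ⟨hm₃, Finset.filter_subset _ _⟩) hr₃

end IsShellingOrder

section PartialOrder

variable [PartialOrder α]

theorem IsChainFinsetIn.le_or_ge {S : Set α} {m : Finset α} (hm : IsChainFinsetIn (· ≤ ·) S m)
    {u v : α} (hu : u ∈ m) (hv : v ∈ m) : u ≤ v ∨ v ≤ u := by
  rcases eq_or_ne u v with rfl | huv
  · exact Or.inl le_rfl
  · exact hm.2 u hu v hv huv

variable [DecidableEq α]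

theorem IsMaxChainFinsetIn.filter_mem_Icc {a b : α} {m : Finset α}
    [DecidablePred (· ∈ Set.Icc a b)] (hm : IsMaxChainFinsetIn (· ≤ ·) Set.univ m)
    (ha : a ∈ m) (hb : b ∈ m) :
    IsMaxChainFinsetIn (· ≤ ·) (Set.Icc a b) (m.filter (· ∈ Set.Icc a b)) := by
  refine hm.filter_mem (Set.subset_univ _) fun w hw hwI z hz => ?_
  rcases hm.1.le_or_ge hw ha with hwa | haw
  · exact Or.inr (hwa.trans hz.1)
  rcases hm.1.le_or_ge hw hb with hwb | hbw
  · exact absurd ⟨haw, hwb⟩ hwI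
  · exact Or.inl (hz.2.trans hbw)

theorem IsShellableIn.Icc [Finite α] (h : IsShellableIn (· ≤ ·) (Set.univ : Set α)) {a b : α}
    (hab : a ≤ b) : IsShellableIn (· ≤ ·) (Set.Icc a b) := by
  classical
  obtain ⟨r, hr⟩ := h
  refine hr.isShellableIn_of_subset (Set.subset_univ _) fun c₁ c₂ m h₁ h₂ hm hsub => ?_
  have hends (c) (hc : IsMaxChainFinsetIn (· ≤ ·) (Set.Icc a b) c) : a ∈ c ∧ b ∈ c :=
    ⟨hc.mem_of_forall_comparable ⟨le_rfl, hab⟩ fun z hz _ => Or.inr (hc.1.1 hz).1,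
      hc.mem_of_forall_comparable ⟨hab, le_rfl⟩ fun z hz _ => Or.inl (hc.1.1 hz).2⟩
  exact hm.filter_mem_Icc (hsub (Finset.mem_inter.2 ⟨(hends c₁ h₁).1, (hends c₂ h₂).1⟩))
    (hsub (Finset.mem_inter.2 ⟨(hends c₁ h₁).2, (hends c₂ h₂).2⟩))

theorem IsShellableIn.diff_singleton [Finite α] {S : Set α} {t : α}
    (h : IsShellableIn (· ≤ ·) S) (hcomp : ∀ z ∈ S, z ≤ t ∨ t ≤ z) :
    IsShellableIn (· ≤ ·) (S \ {t}) := by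
  classical
  obtain ⟨r, hr⟩ := h
  refine hr.isShellableIn_of_subset Set.sdiff_subset fun _ _ m _ _ hm _ =>
    hm.filter_mem Set.sdiff_subset fun w hw hwT z hz => ?_
  obtain rfl : w = t := by_contra fun hwt => hwT ⟨hm.1.1 hw, hwt⟩
  exact hcomp z hz.1

end PartialOrder

theorem intervals_of_shellable_are_shellable_general
    [PartialOrder α] [Fintype α] [DecidableEq α]
    (hshell : IsShellableIn (· ≤ · : α → α → Prop) Set.univ)
    (a b : α) (hab : a ≤ b) :
    IsShellableIn (· ≤ · : α → α → Prop) (Set.Icc a b) ∧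
      IsShellableIn (· ≤ · : α → α → Prop) (Set.Ico a b) ∧
        IsShellableIn (· ≤ · : α → α → Prop) (Set.Ioc a b) ∧
          IsShellableIn (· ≤ · : α → α → Prop) (Set.Ioo a b) := by
  have hIcc := hshell.Icc hab
  have hIco := hIcc.diff_singleton (t := b) fun _ hz => Or.inl hz.2
  have hIoc := hIcc.diff_singleton (t := a) fun _ hz => Or.inr hz.1
  rw [Set.Icc_sdiff_right] at hIco
  rw [Set.Icc_sdiff_left] at hIoc
  have hIoo := hIoc.diff_singleton (t := b) fun _ hz => Or.inl hz.2
  rw [Set.Ioc_sdiff_right] at hIoo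
  exact ⟨hIcc, hIco, hIoc, hIoo⟩

/-- Let `P` be a finite graded shellable poset and `a ≤ b`
elements of `P`. Then each of the induced subposets `[a,b]`, `[a,b)`, `(a,b]`
and `(a,b)` is shellable. -/
theorem intervals_of_shellable_are_shellable
    [PartialOrder α] [Fintype α] [DecidableEq α]
    (hgraded : IsGradedIn (· ≤ · : α → α → Prop) Set.univ)
    (hshell : IsShellableIn (· ≤ · : α → α → Prop) Set.univ)
    (a b : α) (hab : a ≤ b) :
    IsShellableIn (· ≤ · : α → α → Prop) (Set.Icc a b) ∧
      IsShellableIn (· ≤ · : α → α → Prop) (Set.Ico a b) ∧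
        IsShellableIn (· ≤ · : α → α → Prop) (Set.Ioc a b) ∧
          IsShellableIn (· ≤ · : α → α → Prop) (Set.Ioo a b) :=
  intervals_of_shellable_are_shellable_general hshell a b hab
end

section
/- Let P be a finite graded shellable poset with a unique minimal element z, and let P′ be the poset obtained from P by adjoining one new element z′ whose order relations are: z′ < u in P′ if and only if z < u in P (so z′ covers nothing, z′ is covered by precisely the elements that cover z, and z′ is incomparable to z). Then P′ is shellable. -/
variable {α : Type*}

/-- The order relation of the poset obtained from `α` by adjoining one new
element `z'` (represented by `Sum.inr ()`) whose order relations are: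
`z' < u` if and only if `z < u` in `α`.  Thus `z'` covers nothing, is covered
precisely by the elements covering `z`, and is incomparable to `z`. -/
def adjoinLE [PartialOrder α] (z : α) : α ⊕ Unit → α ⊕ Unit → Prop
  | Sum.inl a, Sum.inl b => a ≤ b
  | Sum.inl _, Sum.inr _ => False
  | Sum.inr _, Sum.inl b => z < b
  | Sum.inr _, Sum.inr _ => True

/-!
Since `P` is finite, every element lies above a minimal one, so `z` is the bottom of `P` and lies
on every maximal chain. The maximal chains of `P'` are therefore the maximal chains `m` of `P`
together with their copies `m - z + z'`. Shell the old chains first and then the new ones, each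
block in the given shelling order. Inside a block the shelling condition is transported from `P`
(the removed element `x` is never `z`, because `z` lies on every chain); an old chain before a
new chain `n - z + z'` is handled by the old chain `n`, which meets it in everything but `z'`.
-/

section Chains

variable {le : α → α → Prop} {C : Finset α}

theorem isChainFinsetIn_univ_iff : IsChainFinsetIn le Set.univ C ↔ IsChain le (C : Set α) := by
  simp [IsChainFinsetIn, IsChain, Set.Pairwise]

theorem IsMaxChainFinsetIn.mem_of_forall [DecidableEq α] {a : α}
    (hC : IsMaxChainFinsetIn le Set.univ C) (ha : ∀ b ∈ C, le a b ∨ le b a) : a ∈ C := by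
  have hchain : IsChainFinsetIn le Set.univ (insert a C) := by
    rw [isChainFinsetIn_univ_iff, Finset.coe_insert]
    exact (isChainFinsetIn_univ_iff.1 hC.1).insert fun b hb _ => ha b hb
  rw [← hC.2 _ hchain (Finset.subset_insert a C)]
  exact Finset.mem_insert_self a C

theorem IsMaxChainFinsetIn.mem_of_isBot [LE α] [DecidableEq α] {z : α}
    (hC : IsMaxChainFinsetIn (· ≤ ·) Set.univ C) (hz : IsBot z) : z ∈ C :=
  hC.mem_of_forall fun a _ => Or.inl (hz a)

end Chains

theorem isBot_of_forall_isMin_eq [Preorder α] [Finite α] {z : α}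
    (h : ∀ w : α, IsMin w → w = z) : IsBot z := fun a => by
  obtain ⟨b, hba, hb⟩ := exists_minimal_le_of_wellFoundedLT (fun _ => True) a trivial
  exact h b (minimal_true.1 hb) ▸ hba

section LiftChain

variable [DecidableEq α] {z : α} {m n : Finset α} {C D : Finset (α ⊕ Unit)}

/-- `liftChain z false m` is `m` itself inside `P'`, `liftChain z true m` is `m - z + z'`. -/
def liftChain (z : α) : Bool → Finset α → Finset (α ⊕ Unit)
  | false, m => m.map Function.Embedding.inl
  | true, m => insert (Sum.inr ()) ((m.erase z).map Function.Embedding.inl)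

def lowerChain (z : α) (C : Finset (α ⊕ Unit)) : Finset α :=
  insert z C.toLeft

def passesNew (C : Finset (α ⊕ Unit)) : Bool :=
  decide (Sum.inr () ∈ C)

def liftShellingOrder (z : α) (r : Finset α → Finset α → Prop) (C D : Finset (α ⊕ Unit)) :
    Prop :=
  passesNew C < passesNew D ∨ passesNew C = passesNew D ∧ r (lowerChain z C) (lowerChain z D)

@[simp]
theorem inl_mem_liftChain_false {a : α} : Sum.inl a ∈ liftChain z false m ↔ a ∈ m := by
  simp [liftChain]

@[simp]
theorem inl_mem_liftChain_true {a : α} : Sum.inl a ∈ liftChain z true m ↔ a ≠ z ∧ a ∈ m := by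
  simp [liftChain]

@[simp]
theorem inr_mem_liftChain {b : Bool} {u : Unit} : Sum.inr u ∈ liftChain z b m ↔ b = true := by
  cases b <;> simp [liftChain]

theorem passesNew_liftChain (b : Bool) : passesNew (liftChain z b m) = b := by
  simp [passesNew]

theorem lowerChain_liftChain (hzm : z ∈ m) (b : Bool) : lowerChain z (liftChain z b m) = m := by
  ext a
  by_cases haz : a = z <;> cases b <;> simp [lowerChain, haz, hzm]

theorem lowerChain_mono (h : C ⊆ D) : lowerChain z C ⊆ lowerChain z D :=
  Finset.insert_subset_insert z (Finset.toLeft_monotone h)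

theorem liftChain_mono (h : m ⊆ n) (b : Bool) : liftChain z b m ⊆ liftChain z b n := by
  cases b
  · exact Finset.map_subset_map.2 h
  · exact Finset.insert_subset_insert _ (Finset.map_subset_map.2 (Finset.erase_subset_erase z h))

theorem liftChain_inter (b : Bool) :
    liftChain z b (m ∩ n) = liftChain z b m ∩ liftChain z b n := by
  ext (a | u) <;> cases b <;> simp [and_assoc, and_left_comm]

theorem liftChain_erase (x : α) (b : Bool) :
    liftChain z b (m.erase x) = (liftChain z b m).erase (Sum.inl x) := by
  ext (a | u) <;> cases b <;> simp [and_left_comm]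

theorem liftChain_false_inter_liftChain_true_subset :
    liftChain z false m ∩ liftChain z true n ⊆ liftChain z false n := by
  rintro (a | u) <;> simp +contextual

theorem liftChain_false_inter_liftChain_true :
    liftChain z false n ∩ liftChain z true n = (liftChain z true n).erase (Sum.inr ()) := by
  ext (a | u) <;> simp

theorem liftShellingOrder_liftChain {r : Finset α → Finset α → Prop} {b c : Bool} (hzm : z ∈ m)
    (hzn : z ∈ n) :
    liftShellingOrder z r (liftChain z b m) (liftChain z c n) ↔ b < c ∨ b = c ∧ r m n := by
  simp only [liftShellingOrder, passesNew_liftChain, lowerChain_liftChain hzm,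
    lowerChain_liftChain hzn]

end LiftChain

section AdjoinLE

variable [PartialOrder α] {z : α} {C : Finset (α ⊕ Unit)}

-- `z` and `z'` are incomparable.
theorem IsChainFinsetIn.inl_notMem_of_inr_mem (hC : IsChainFinsetIn (adjoinLE z) Set.univ C)
    (hr : Sum.inr () ∈ C) : Sum.inl z ∉ C := fun hz => by
  simpa [adjoinLE] using hC.2 _ hz _ hr (by simp)

variable [DecidableEq α] {m : Finset α}

theorem isChain_liftChain (hz : IsBot z) (hm : IsChainFinsetIn (· ≤ ·) Set.univ m) (b : Bool) :
    IsChainFinsetIn (adjoinLE z) Set.univ (liftChain z b m) := by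
  refine ⟨Set.subset_univ _, ?_⟩
  rintro (a | u) ha (c | v) hc hne
  · have ha' : a ∈ m := by cases b <;> simp_all
    have hc' : c ∈ m := by cases b <;> simp_all
    exact hm.2 a ha' c hc' (Sum.inl.inj_iff.not.1 hne)
  · obtain rfl : b = true := inr_mem_liftChain.1 hc
    exact Or.inr ((hz a).lt_of_ne' (inl_mem_liftChain_true.1 ha).1)
  · obtain rfl : b = true := inr_mem_liftChain.1 ha
    exact Or.inl ((hz c).lt_of_ne' (inl_mem_liftChain_true.1 hc).1)
  · exact Or.inl trivial

theorem isChain_lowerChain (hz : IsBot z) (hC : IsChainFinsetIn (adjoinLE z) Set.univ C) :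
    IsChainFinsetIn (· ≤ ·) Set.univ (lowerChain z C) := by
  rw [isChainFinsetIn_univ_iff, lowerChain, Finset.coe_insert]
  refine IsChain.insert (fun a ha b hb hab => ?_) fun b _ _ => Or.inl (hz b)
  exact hC.2 _ (Finset.mem_toLeft.1 ha) _ (Finset.mem_toLeft.1 hb) (Sum.inl_injective.ne hab)

theorem liftChain_passesNew_lowerChain (hC : IsChainFinsetIn (adjoinLE z) Set.univ C)
    (h : Sum.inr () ∈ C ∨ Sum.inl z ∈ C) : liftChain z (passesNew C) (lowerChain z C) = C := by
  by_cases hr : Sum.inr () ∈ C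
  · have hz := hC.inl_notMem_of_inr_mem hr
    ext (a | u)
    · simp only [passesNew, hr, decide_true, lowerChain, inl_mem_liftChain_true,
        Finset.mem_insert, Finset.mem_toLeft]
      grind
    · simp [passesNew, hr]
  · have hz : Sum.inl z ∈ C := h.resolve_left hr
    ext (a | u)
    · simp only [passesNew, hr, decide_false, lowerChain, inl_mem_liftChain_false,
        Finset.mem_insert, Finset.mem_toLeft]
      grind
    · simp [passesNew, hr]

theorem IsMaxChainFinsetIn.inr_mem_or_inl_mem (hz : IsBot z)
    (hC : IsMaxChainFinsetIn (adjoinLE z) Set.univ C) : Sum.inr () ∈ C ∨ Sum.inl z ∈ C := by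
  refine or_iff_not_imp_left.2 fun hr => hC.mem_of_forall ?_
  rintro (a | u) ha
  · exact Or.inl (hz a)
  · exact absurd ha hr

theorem isMaxChain_liftChain (hz : IsBot z) (hm : IsMaxChainFinsetIn (· ≤ ·) Set.univ m)
    (b : Bool) : IsMaxChainFinsetIn (adjoinLE z) Set.univ (liftChain z b m) := by
  have hzm : z ∈ m := hm.mem_of_isBot hz
  refine ⟨isChain_liftChain hz hm.1 b, fun C hC hsub => ?_⟩
  have hlower : lowerChain z C = m :=
    hm.2 _ (isChain_lowerChain hz hC) (lowerChain_liftChain hzm b ▸ lowerChain_mono hsub)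
  cases b
  · have hzC : Sum.inl z ∈ C := hsub (by simpa using hzm)
    have hpasses : passesNew C = false := by
      simpa [passesNew] using hC.inl_notMem_of_inr_mem.mt (not_not.2 hzC)
    rw [← liftChain_passesNew_lowerChain hC (Or.inr hzC), hlower, hpasses]
  · have hrC : Sum.inr () ∈ C := hsub (by simp)
    have hpasses : passesNew C = true := by simpa [passesNew] using hrC
    rw [← liftChain_passesNew_lowerChain hC (Or.inl hrC), hlower, hpasses]

theorem isMaxChain_lowerChain (hz : IsBot z) (hC : IsMaxChainFinsetIn (adjoinLE z) Set.univ C) :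
    IsMaxChainFinsetIn (· ≤ ·) Set.univ (lowerChain z C) := by
  have hC_eq := liftChain_passesNew_lowerChain hC.1 (hC.inr_mem_or_inl_mem hz)
  refine ⟨isChain_lowerChain hz hC.1, fun m hm hsub => ?_⟩
  have hzm : z ∈ m := hsub (Finset.mem_insert_self z _)
  have hlift := hC.2 _ (isChain_liftChain hz hm (passesNew C))
    (hC_eq.symm.subset.trans (liftChain_mono hsub _))
  rw [← lowerChain_liftChain hzm (passesNew C), hlift]

theorem IsMaxChainFinsetIn.exists_eq_liftChain (hz : IsBot z)
    (hC : IsMaxChainFinsetIn (adjoinLE z) Set.univ C) :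
    ∃ b m, IsMaxChainFinsetIn (· ≤ ·) Set.univ m ∧ C = liftChain z b m :=
  ⟨_, _, isMaxChain_lowerChain hz hC,
    (liftChain_passesNew_lowerChain hC.1 (hC.inr_mem_or_inl_mem hz)).symm⟩

variable {n : Finset α} {r : Finset α → Finset α → Prop}

theorem IsShellingOrder.exists_liftChain_shelling (hz : IsBot z)
    (hr : IsShellingOrder (· ≤ ·) Set.univ r) (hm : IsMaxChainFinsetIn (· ≤ ·) Set.univ m)
    (hn : IsMaxChainFinsetIn (· ≤ ·) Set.univ n) {b c : Bool} (h : b < c ∨ b = c ∧ r m n) :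
    ∃ C, IsMaxChainFinsetIn (adjoinLE z) Set.univ C ∧ liftShellingOrder z r C (liftChain z c n) ∧
      ∃ x ∈ liftChain z c n, liftChain z b m ∩ liftChain z c n ⊆ C ∩ liftChain z c n ∧
        C ∩ liftChain z c n = (liftChain z c n).erase x := by
  have hzn : z ∈ n := hn.mem_of_isBot hz
  rcases h with hbc | ⟨rfl, hmn⟩
  · obtain ⟨rfl, rfl⟩ : b = false ∧ c = true := by revert b c; decide
    refine ⟨liftChain z false n, isMaxChain_liftChain hz hn false,
      (liftShellingOrder_liftChain hzn hzn).2 (Or.inl hbc), Sum.inr (), by simp,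
      Finset.subset_inter liftChain_false_inter_liftChain_true_subset Finset.inter_subset_right,
      liftChain_false_inter_liftChain_true⟩
  · obtain ⟨k, hk, hkn, x, hx, hsub, heq⟩ := hr.2.2.2 m n hm hn hmn
    have hzk : z ∈ k := hk.mem_of_isBot hz
    have hxz : x ≠ z := by
      rintro rfl
      have hxn : x ∈ n.erase x := heq ▸ Finset.mem_inter.2 ⟨hzk, hzn⟩
      exact Finset.notMem_erase x n hxn
    refine ⟨liftChain z b k, isMaxChain_liftChain hz hk b,
      (liftShellingOrder_liftChain hzk hzn).2 (Or.inr ⟨rfl, hkn⟩), Sum.inl x, ?_, ?_, ?_⟩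
    · cases b <;> simp [hx, hxz]
    · rw [← liftChain_inter, ← liftChain_inter]
      exact liftChain_mono hsub b
    · rw [← liftChain_inter, heq, liftChain_erase]

theorem isShellingOrder_liftShellingOrder (hz : IsBot z)
    (hr : IsShellingOrder (· ≤ ·) Set.univ r) :
    IsShellingOrder (adjoinLE z) Set.univ (liftShellingOrder z r) := by
  have hzm {m : Finset α} (hm : IsMaxChainFinsetIn (· ≤ ·) Set.univ m) : z ∈ m :=
    hm.mem_of_isBot hz
  refine ⟨fun C hC => ?_, fun C₁ C₂ C₃ h₁ h₂ h₃ => ?_, fun C D hC hD hne => ?_,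
    fun C D hC hD hCD => ?_⟩
  · obtain ⟨b, m, hm, rfl⟩ := hC.exists_eq_liftChain hz
    rw [liftShellingOrder_liftChain (hzm hm) (hzm hm)]
    rintro (h | ⟨-, h⟩)
    exacts [lt_irrefl b h, hr.1 m hm h]
  · obtain ⟨b₁, m₁, hm₁, rfl⟩ := h₁.exists_eq_liftChain hz
    obtain ⟨b₂, m₂, hm₂, rfl⟩ := h₂.exists_eq_liftChain hz
    obtain ⟨b₃, m₃, hm₃, rfl⟩ := h₃.exists_eq_liftChain hz
    simp only [liftShellingOrder_liftChain (hzm hm₁) (hzm hm₂),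
      liftShellingOrder_liftChain (hzm hm₂) (hzm hm₃),
      liftShellingOrder_liftChain (hzm hm₁) (hzm hm₃)]
    rintro (h₁₂ | ⟨rfl, h₁₂⟩) (h₂₃ | ⟨rfl, h₂₃⟩)
    · exact Or.inl (h₁₂.trans h₂₃)
    · exact Or.inl h₁₂
    · exact Or.inl h₂₃
    · exact Or.inr ⟨rfl, hr.2.1 _ _ _ hm₁ hm₂ hm₃ h₁₂ h₂₃⟩
  · obtain ⟨b, m, hm, rfl⟩ := hC.exists_eq_liftChain hz
    obtain ⟨c, n, hn, rfl⟩ := hD.exists_eq_liftChain hz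
    rw [liftShellingOrder_liftChain (hzm hm) (hzm hn),
      liftShellingOrder_liftChain (hzm hn) (hzm hm)]
    rcases lt_trichotomy b c with hbc | rfl | hcb
    · exact Or.inl (Or.inl hbc)
    · have hmn : m ≠ n := fun h => hne (h ▸ rfl)
      exact (hr.2.2.1 m n hm hn hmn).imp (fun h => Or.inr ⟨rfl, h⟩) fun h => Or.inr ⟨rfl, h⟩
    · exact Or.inr (Or.inl hcb)
  · obtain ⟨b, m, hm, rfl⟩ := hC.exists_eq_liftChain hz
    obtain ⟨c, n, hn, rfl⟩ := hD.exists_eq_liftChain hz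
    rw [liftShellingOrder_liftChain (hzm hm) (hzm hn)] at hCD
    exact hr.exists_liftChain_shelling hz hm hn hCD

end AdjoinLE

theorem adjoin_second_minimum_shellable_general
    [PartialOrder α] [Fintype α] [DecidableEq α]
    (hshell : IsShellableIn (· ≤ · : α → α → Prop) Set.univ)
    (z : α) (huniq : ∀ w : α, IsMin w → w = z) :
    IsShellableIn (adjoinLE z) (Set.univ : Set (α ⊕ Unit)) :=
  let ⟨_, hr⟩ := hshell
  ⟨_, isShellingOrder_liftShellingOrder (isBot_of_forall_isMin_eq huniq) hr⟩

/-- Let `P` be a finite graded shellable poset with a unique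
minimal element `z`, and let `P'` be obtained from `P` by adjoining one new
element `z'` with `z' < u` iff `z < u`.  Then `P'` is shellable. -/
theorem adjoin_second_minimum_shellable
    [PartialOrder α] [Fintype α] [DecidableEq α]
    (hgraded : IsGradedIn (· ≤ · : α → α → Prop) Set.univ)
    (hshell : IsShellableIn (· ≤ · : α → α → Prop) Set.univ)
    (z : α) (hmin : IsMin z) (huniq : ∀ w : α, IsMin w → w = z) :
    IsShellableIn (adjoinLE z) (Set.univ : Set (α ⊕ Unit)) :=
  adjoin_second_minimum_shellable_general hshell z huniq
end

section
/- Let P be a finite graded shellable poset whose minimal elements are exactly two elements z and z′, and suppose z and z′ are covered by exactly the same set of elements of P. Let P′ be the poset obtained from P by adjoining one new element w with w < u for every u ∈ P (so w is covered precisely by z and z′). Then P′ is shellable. -/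
variable {α : Type*}

set_option linter.unusedSectionVars false
section
variable [PartialOrder α] [Fintype α] [DecidableEq α]

def embBot : α ↪ WithBot α := ⟨(↑·), WithBot.coe_injective⟩

def stripBot (D : Finset (WithBot α)) : Finset α :=
  Finset.univ.filter (fun a : α => (a : WithBot α) ∈ D)

def liftBot (C : Finset α) : Finset (WithBot α) := insert ⊥ (C.map embBot)

@[simp] lemma mem_stripBot {D : Finset (WithBot α)} {a : α} :
    a ∈ stripBot D ↔ (a : WithBot α) ∈ D := by
  simp [stripBot]

@[simp] lemma mem_liftBot {C : Finset α} {x : WithBot α} :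
    x ∈ liftBot C ↔ x = ⊥ ∨ ∃ a ∈ C, (a : WithBot α) = x := by
  simp [liftBot, embBot]

@[simp] lemma strip_lift (C : Finset α) : stripBot (liftBot C) = C := by
  ext a; simp

lemma chain_lift {C : Finset α}
    (hC : IsChainFinsetIn (· ≤ ·) Set.univ C) :
    IsChainFinsetIn (· ≤ ·) Set.univ (liftBot C) := by
  refine ⟨Set.subset_univ _, ?_⟩
  intro u hu v hv huv
  rcases mem_liftBot.mp hu with rfl | ⟨a, ha, rfl⟩
  · exact Or.inl bot_le
  rcases mem_liftBot.mp hv with rfl | ⟨b, hb, rfl⟩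
  · exact Or.inr bot_le
  have : a ≠ b := fun h => huv (by rw [h])
  rcases hC.2 a ha b hb this with h | h
  · exact Or.inl (WithBot.coe_le_coe.mpr h)
  · exact Or.inr (WithBot.coe_le_coe.mpr h)

lemma chain_strip {D : Finset (WithBot α)}
    (hD : IsChainFinsetIn (· ≤ ·) Set.univ D) :
    IsChainFinsetIn (· ≤ ·) Set.univ (stripBot D) := by
  refine ⟨Set.subset_univ _, ?_⟩
  intro u hu v hv huv
  have := hD.2 u (mem_stripBot.mp hu) v (mem_stripBot.mp hv)
    (fun h => huv (WithBot.coe_injective h))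
  rcases this with h | h
  · exact Or.inl (WithBot.coe_le_coe.mp h)
  · exact Or.inr (WithBot.coe_le_coe.mp h)

lemma maxchain_lift {C : Finset α}
    (hC : IsMaxChainFinsetIn (· ≤ ·) Set.univ C) :
    IsMaxChainFinsetIn (· ≤ ·) Set.univ (liftBot C) := by
  refine ⟨chain_lift hC.1, ?_⟩
  intro D' hD' hsub
  have hCsub : C ⊆ stripBot D' := by
    intro a ha
    exact mem_stripBot.mpr (hsub (mem_liftBot.mpr (Or.inr ⟨a, ha, rfl⟩)))
  have hCeq : stripBot D' = C := hC.2 _ (chain_strip hD') hCsub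
  apply Finset.Subset.antisymm _ hsub
  intro x hx
  induction x using WithBot.recBotCoe with
  | bot => exact mem_liftBot.mpr (Or.inl rfl)
  | coe a =>
    have : a ∈ stripBot D' := mem_stripBot.mpr hx
    rw [hCeq] at this
    exact mem_liftBot.mpr (Or.inr ⟨a, this, rfl⟩)

lemma maxchain_strip {D : Finset (WithBot α)}
    (hD : IsMaxChainFinsetIn (· ≤ ·) Set.univ D) :
    IsMaxChainFinsetIn (· ≤ ·) Set.univ (stripBot D) ∧ D = liftBot (stripBot D) := by
  have hbot : (⊥ : WithBot α) ∈ D := by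
    have hch : IsChainFinsetIn (· ≤ ·) Set.univ (insert ⊥ D) := by
      refine ⟨Set.subset_univ _, ?_⟩
      intro u hu v hv huv
      rcases Finset.mem_insert.mp hu with rfl | hu
      · exact Or.inl bot_le
      rcases Finset.mem_insert.mp hv with rfl | hv
      · exact Or.inr bot_le
      exact hD.1.2 u hu v hv huv
    have := hD.2 _ hch (Finset.subset_insert _ _)
    rw [← this]; exact Finset.mem_insert_self _ _
  have heq : D = liftBot (stripBot D) := by
    ext x
    constructor
    · intro hx
      induction x using WithBot.recBotCoe with
      | bot => exact mem_liftBot.mpr (Or.inl rfl)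
      | coe a => exact mem_liftBot.mpr (Or.inr ⟨a, mem_stripBot.mpr hx, rfl⟩)
    · intro hx
      rcases mem_liftBot.mp hx with rfl | ⟨a, ha, rfl⟩
      · exact hbot
      · exact mem_stripBot.mp ha
  refine ⟨⟨chain_strip hD.1, ?_⟩, heq⟩
  intro C' hC' hsub
  have : liftBot C' = D := by
    apply hD.2 _ (chain_lift hC')
    rw [heq]
    intro x hx
    rcases mem_liftBot.mp hx with rfl | ⟨a, ha, rfl⟩
    · exact mem_liftBot.mpr (Or.inl rfl)
    · exact mem_liftBot.mpr (Or.inr ⟨a, hsub ha, rfl⟩)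
  calc C' = stripBot (liftBot C') := (strip_lift C').symm
    _ = stripBot D := by rw [this]

end

/-- Let `P` be a finite graded shellable poset whose minimal
elements are exactly two elements `z` and `z'`, covered by exactly the same
elements.  Adjoining one new element below everything (here: passing to
`WithBot α`, whose bottom is covered precisely by `z` and `z'`) yields a
shellable poset. -/
theorem adjoin_bottom_shellable
    [PartialOrder α] [Fintype α] [DecidableEq α]
    (hgraded : IsGradedIn (· ≤ · : α → α → Prop) Set.univ)
    (hshell : IsShellableIn (· ≤ · : α → α → Prop) Set.univ)
    (z z' : α) (hne : z ≠ z') (hz : IsMin z) (hz' : IsMin z')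
    (huniq : ∀ w : α, IsMin w → w = z ∨ w = z')
    (hcov : ∀ u : α, z ⋖ u ↔ z' ⋖ u) :
    IsShellableIn (· ≤ · : WithBot α → WithBot α → Prop)
      (Set.univ : Set (WithBot α)) := by
  obtain ⟨r, hirr, htrans, htot, hshl⟩ := hshell
  refine ⟨fun D₁ D₂ => r (stripBot D₁) (stripBot D₂), ?_, ?_, ?_, ?_⟩
  · intro C hC
    exact hirr _ (maxchain_strip hC).1
  · intro C₁ C₂ C₃ h₁ h₂ h₃
    exact htrans _ _ _ (maxchain_strip h₁).1 (maxchain_strip h₂).1 (maxchain_strip h₃).1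
  · intro C₁ C₂ h₁ h₂ hne12
    refine htot _ _ (maxchain_strip h₁).1 (maxchain_strip h₂).1 ?_
    intro h
    apply hne12
    rw [(maxchain_strip h₁).2, (maxchain_strip h₂).2, h]
  · intro m₁ m₂ h₁ h₂ hr
    obtain ⟨hn₁, he₁⟩ := maxchain_strip h₁
    obtain ⟨hn₂, he₂⟩ := maxchain_strip h₂
    obtain ⟨n₃, hn₃, hr₃, x, hx, hsub, heq⟩ := hshl _ _ hn₁ hn₂ hr
    refine ⟨liftBot n₃, maxchain_lift hn₃, by simpa using hr₃, (x : WithBot α),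
      he₂ ▸ mem_liftBot.mpr (Or.inr ⟨x, hx, rfl⟩), ?_, ?_⟩
    · intro y hy
      rw [Finset.mem_inter] at hy ⊢
      rw [he₁, he₂] at hy
      obtain ⟨hy1, hy2⟩ := hy
      rcases mem_liftBot.mp hy1 with rfl | ⟨a, ha, rfl⟩
      · exact ⟨mem_liftBot.mpr (Or.inl rfl), he₂ ▸ mem_liftBot.mpr (Or.inl rfl)⟩
      · rcases mem_liftBot.mp hy2 with h | ⟨b, hb, hba⟩
        · exact absurd h (by simp)
        · have hb' : a ∈ stripBot m₂ := by
            rwa [WithBot.coe_inj.mp hba] at hb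
          have : a ∈ n₃ ∩ stripBot m₂ := hsub (Finset.mem_inter.mpr ⟨ha, hb'⟩)
          rw [Finset.mem_inter] at this
          refine ⟨mem_liftBot.mpr (Or.inr ⟨a, this.1, rfl⟩),
            he₂ ▸ mem_liftBot.mpr (Or.inr ⟨a, this.2, rfl⟩)⟩
    · ext y
      rw [Finset.mem_inter, Finset.mem_erase]
      constructor
      · rintro ⟨hy1, hy2⟩
        rcases mem_liftBot.mp hy1 with rfl | ⟨a, ha, rfl⟩
        · exact ⟨by simp, hy2⟩
        · have hy2' : a ∈ stripBot m₂ := mem_stripBot.mpr hy2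
          have : a ∈ (stripBot m₂).erase x := heq ▸ Finset.mem_inter.mpr ⟨ha, hy2'⟩
          rw [Finset.mem_erase] at this
          exact ⟨by exact_mod_cast this.1, hy2⟩
      · rintro ⟨hyx, hy⟩
        refine ⟨?_, hy⟩
        rw [he₂] at hy
        rcases mem_liftBot.mp hy with rfl | ⟨a, ha, rfl⟩
        · exact mem_liftBot.mpr (Or.inl rfl)
        · have hax : a ≠ x := fun h => hyx (by rw [h])
          have : a ∈ n₃ ∩ stripBot m₂ := heq ▸ Finset.mem_erase.mpr ⟨hax, ha⟩
          exact mem_liftBot.mpr (Or.inr ⟨a, (Finset.mem_inter.mp this).1, rfl⟩)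
end

section
/- Let P be a finite graded EL-shellable poset. Then every closed interval [a,b] of P is shellable. -/
variable {α : Type*}

/-- The covering relation within the subposet `S`. -/
def CovRelIn (le : α → α → Prop) (S : Set α) (u v : α) : Prop :=
  u ∈ S ∧ v ∈ S ∧ le u v ∧ u ≠ v ∧ ∀ w ∈ S, le u w → le w v → w = u ∨ w = v

/-- `L` is a maximal chain of the closed interval of the subposet `S` between `a`
and `b`, listed in increasing order: consecutive entries are covers in the
interval, the list starts at `a` and ends at `b`. -/
def IsMaxChainListIn (le : α → α → Prop) (S : Set α) (a b : α) (L : List α) : Prop :=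
  (∀ z ∈ L, z ∈ orderInterval le S a b) ∧
    L.Chain' (CovRelIn le (orderInterval le S a b)) ∧
    L.head? = some a ∧ L.getLast? = some b

/-- The label sequence of a chain, listed in increasing order. -/
def labelSeq {Λ : Type*} (f : α → α → Λ) (L : List α) : List Λ :=
  (L.zip L.tail).map fun p => f p.1 p.2

/-- `f` is an EL-labeling of the subposet `S`: in every closed interval there is a
unique maximal chain with weakly increasing label sequence, and its label
sequence is lexicographically smaller than that of every other maximal chain of
the interval. -/
def IsELShellingIn {Λ : Type*} [LinearOrder Λ] (le : α → α → Prop) (S : Set α)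
    (f : α → α → Λ) : Prop :=
  ∀ a ∈ S, ∀ b ∈ S, le a b →
    ∃ L₀ : List α, IsMaxChainListIn le S a b L₀ ∧ (labelSeq f L₀).Chain' (· ≤ ·) ∧
      (∀ L : List α, IsMaxChainListIn le S a b L →
        (labelSeq f L).Chain' (· ≤ ·) → L = L₀) ∧
      (∀ L : List α, IsMaxChainListIn le S a b L → L ≠ L₀ →
        List.Lex (· < ·) (labelSeq f L₀) (labelSeq f L))

/-- The subposet `S` is EL-shellable. -/
def IsELShellableIn (le : α → α → Prop) (S : Set α) : Prop :=
  ∃ (Λ : Type) (_ : LinearOrder Λ) (f : α → α → Λ), IsELShellingIn le S f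

/-!
Björner's argument. Order the maximal chains of `[a, b]` lexicographically by their label
sequences, ties broken arbitrarily. Suppose `m₁` precedes `m₂`, and let `c` be the last element
before the two chains part. On `[c, b]` the chain `m₂` is not the increasing one, so it has a
first descent `u ⋖ x ⋖ v`; were `x ∈ m₁`, the stretch of `m₂` from `c` to `x` would be the
increasing chain of `[c, x]`, and by gradedness `m₂` would precede `m₁`. Replacing `x` by the
middle element of the increasing chain of `[u, v]` gives a chain `m₃` preceding `m₂` with
`m₁ ∩ m₂ ⊆ m₃ ∩ m₂ = m₂ \ {x}`.
-/

open Set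

namespace List

theorem lt_append_of_lt_of_length_eq {β : Type*} [LT β] {l₁ l₂ : List β} (h : l₁ < l₂)
    (hlen : l₁.length = l₂.length) (s t : List β) : l₁ ++ s < l₂ ++ t := by
  induction h with
  | nil => simp at hlen
  | cons _ ih => exact Lex.cons (ih (by simpa using hlen))
  | rel h => exact Lex.rel h

theorem toFinset_inter_eq_erase [DecidableEq α] {A B : List α} {x z : α} (hx : x ∉ A ++ B)
    (hzx : z ≠ x) : (A ++ z :: B).toFinset ∩ (A ++ x :: B).toFinset =
      (A ++ x :: B).toFinset.erase x := by
  ext y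
  simp only [mem_append, not_or] at hx
  simp only [Finset.mem_inter, Finset.mem_erase, mem_toFinset, mem_append, mem_cons]
  grind

theorem IsChain.replace_middle {R : α → α → Prop} {P S : List α} {u x v z : α}
    (h : IsChain R (P ++ u :: x :: v :: S)) (huz : R u z) (hzv : R z v) :
    IsChain R (P ++ u :: z :: v :: S) := by
  rw [isChain_append, isChain_cons_cons, isChain_cons_cons] at h ⊢
  exact ⟨h.1, ⟨huz, hzv, h.2.1.2.2⟩, h.2.2⟩

theorem Pairwise.le_or_le_of_eq_append_cons_cons [Preorder α] {L l₁ l₂ : List α} {x y z : α}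
    (hL : L.Pairwise (· < ·)) (hdec : L = l₁ ++ x :: y :: l₂) (hz : z ∈ L) :
    z ≤ x ∨ y ≤ z := by
  subst hdec
  simp only [pairwise_append, pairwise_cons, mem_append, mem_cons] at hL hz
  rcases hz with hz | rfl | rfl | hz
  · exact Or.inl (hL.2.2 z hz x (by simp)).le
  · exact Or.inl le_rfl
  · exact Or.inr le_rfl
  · exact Or.inr (hL.2.1.2.1 z hz).le

theorem Pairwise.head?_eq_of_forall_le [PartialOrder α] {L : List α} {c : α}
    (hL : L.Pairwise (· < ·)) (hc : c ∈ L) (hle : ∀ z ∈ L, c ≤ z) : L.head? = some c := by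
  cases L with
  | nil => simp at hc
  | cons x T =>
    rcases mem_cons.mp hc with rfl | hcT
    · rfl
    · exact absurd (rel_of_pairwise_cons hL hcT) (hle x mem_cons_self).not_gt

theorem Pairwise.getLast?_eq_of_forall_le [PartialOrder α] {L : List α} {d : α}
    (hL : L.Pairwise (· < ·)) (hd : d ∈ L) (hle : ∀ z ∈ L, z ≤ d) : L.getLast? = some d := by
  rcases eq_nil_or_concat L with rfl | ⟨T, x, rfl⟩
  · simp at hd
  · rw [concat_eq_append] at *
    rcases mem_append.mp hd with hdT | hdx
    · exact absurd ((pairwise_append.mp hL).2.2 d hdT x (by simp)) (hle x (by simp)).not_gt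
    · simp_all

end List

theorem Finset.exists_list_pairwise_lt_of_isChain [PartialOrder α] [DecidableEq α]
    {C : Finset α} (hC : IsChain (· ≤ ·) (C : Set α)) :
    ∃ L : List α, L.Pairwise (· < ·) ∧ L.toFinset = C := by
  induction C using Finset.strongInduction with
  | H C ih =>
  rcases C.eq_empty_or_nonempty with rfl | hne
  · exact ⟨[], by simp, rfl⟩
  obtain ⟨m, hm⟩ := Finset.exists_maximal hne
  obtain ⟨L, hL, hLC⟩ := ih (C.erase m) (Finset.erase_ssubset hm.prop)
    (hC.mono (by simp))
  refine ⟨L ++ [m], List.pairwise_append.mpr ⟨hL, by simp, fun u hu v hv => ?_⟩, ?_⟩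
  · rw [List.mem_singleton.mp hv]
    have hu' : u ∈ C.erase m := by rw [← hLC]; exact List.mem_toFinset.mpr hu
    obtain ⟨hum, huC⟩ := Finset.mem_erase.mp hu'
    rcases hC huC hm.prop hum with h | h
    · exact lt_of_le_of_ne h hum
    · exact absurd (hm.eq_of_ge huC h) hum
  · simp [hLC, Finset.insert_erase hm.prop]

theorem IsMaxChainFinsetIn.mem_of_forall_comparable_s3 [DecidableEq α] {le : α → α → Prop}
    {S : Set α} {C : Finset α} {w : α} (hC : IsMaxChainFinsetIn le S C) (hw : w ∈ S)
    (hcomp : ∀ z ∈ C, le w z ∨ le z w) : w ∈ C := by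
  have hchain : IsChainFinsetIn le S (insert w C) := by
    refine ⟨by simpa [Set.insert_subset_iff] using ⟨hw, hC.1.1⟩, fun u hu v hv huv => ?_⟩
    rw [Finset.mem_insert] at hu hv
    rcases hu with rfl | hu <;> rcases hv with rfl | hv
    · exact absurd rfl huv
    · exact hcomp v hv
    · exact (hcomp u hu).symm
    · exact hC.1.2 u hu v hv huv
  rw [← hC.2 _ hchain (Finset.subset_insert w C)]
  exact Finset.mem_insert_self w C

section CoverChain

variable [PartialOrder α]

structure IsCoverChain (c d : α) (L : List α) : Prop where
  head?_eq : L.head? = some c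
  getLast?_eq : L.getLast? = some d
  isChain : L.IsChain (· ⋖ ·)

namespace IsCoverChain

variable {c d : α} {L : List α}

theorem pairwise (h : IsCoverChain c d L) : L.Pairwise (· < ·) :=
  List.isChain_iff_pairwise.mp (h.isChain.imp fun _ _ => CovBy.lt)

theorem nodup (h : IsCoverChain c d L) : L.Nodup :=
  h.pairwise.imp ne_of_lt

theorem mem_Icc (h : IsCoverChain c d L) {z : α} (hz : z ∈ L) : z ∈ Icc c d := by
  obtain ⟨T, rfl⟩ := List.head?_eq_some_iff.mp h.head?_eq
  obtain ⟨T', hT'⟩ := List.getLast?_eq_some_iff.mp h.getLast?_eq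
  refine ⟨?_, ?_⟩
  · rcases List.mem_cons.mp hz with rfl | hz
    · exact le_rfl
    · exact (List.rel_of_pairwise_cons h.pairwise hz).le
  · have hp := h.pairwise
    rw [hT'] at hp hz
    rcases List.mem_append.mp hz with hz | hz
    · exact ((List.pairwise_append.mp hp).2.2 z hz d (by simp)).le
    · exact (List.mem_singleton.mp hz).le

theorem le (h : IsCoverChain c d L) : c ≤ d :=
  (h.mem_Icc (List.mem_of_mem_head? h.head?_eq)).2

theorem eq_singleton (h : IsCoverChain c c L) : L = [c] := by
  obtain ⟨T, rfl⟩ := List.head?_eq_some_iff.mp h.head?_eq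
  cases T with
  | nil => rfl
  | cons y T =>
    have hcy : c < y := List.rel_of_pairwise_cons h.pairwise List.mem_cons_self
    exact absurd (h.mem_Icc (z := y) (by simp)).2 hcy.not_ge

theorem tail {c' y : α} {T : List α} (h : IsCoverChain c d (c' :: y :: T)) :
    IsCoverChain y d (y :: T) :=
  ⟨rfl, by simpa using h.getLast?_eq, (List.isChain_cons_cons.mp h.isChain).2⟩

theorem left_of_append_cons {A B : List α} {x : α} (h : IsCoverChain c d (A ++ x :: B)) :
    IsCoverChain c x (A ++ [x]) where
  head?_eq := by rw [← h.head?_eq]; simp [List.head?_append]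
  getLast?_eq := by simp
  isChain := h.isChain.prefix ⟨B, by simp⟩

theorem replace {P S : List α} {u x v z : α} (h : IsCoverChain c d (P ++ u :: x :: v :: S))
    (huz : u ⋖ z) (hzv : z ⋖ v) : IsCoverChain c d (P ++ u :: z :: v :: S) where
  head?_eq := by rw [← h.head?_eq]; simp [List.head?_append]
  getLast?_eq := by rw [← h.getLast?_eq]; simp [List.getLast?_append]
  isChain := h.isChain.replace_middle huz hzv

theorem eq_of_toFinset_eq [DecidableEq α] {c' d' : α} {L' : List α} (h : IsCoverChain c d L)
    (h' : IsCoverChain c' d' L') (hL : L.toFinset = L'.toFinset) : L = L' :=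
  (List.perm_of_nodup_nodup_toFinset_eq h.nodup h'.nodup hL).eq_of_pairwise
    (fun _ _ _ _ hab hba => (lt_asymm hab hba).elim) h.pairwise h'.pairwise

theorem mem_of_forall_comparable_s3 (h : IsCoverChain c d L) {w : α} (hw : w ∈ Icc c d)
    (hcomp : ∀ z ∈ L, w ≤ z ∨ z ≤ w) : w ∈ L := by
  induction L generalizing c with
  | nil => exact absurd h.head?_eq (by simp)
  | cons y T ih =>
    obtain rfl : y = c := by simpa using h.head?_eq
    cases T with
    | nil =>
      obtain rfl : y = d := by simpa using h.getLast?_eq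
      simp [le_antisymm hw.2 hw.1]
    | cons y' T =>
      rcases hcomp y' (by simp) with hwy | hyw
      · rcases (List.isChain_cons_cons.mp h.isChain).1.eq_or_eq hw.1 hwy with rfl | rfl <;> simp
      · exact List.mem_cons_of_mem _
          (ih h.tail ⟨hyw, hw.2⟩ fun z hz => hcomp z (List.mem_cons_of_mem _ hz))

theorem isMaxChainFinsetIn [DecidableEq α] (h : IsCoverChain c d L) :
    IsMaxChainFinsetIn (· ≤ ·) (Icc c d) L.toFinset := by
  have hcomp : ∀ u ∈ L, ∀ v ∈ L, u ≠ v → u ≤ v ∨ v ≤ u := by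
    have : Std.Symm fun u v : α => u ≤ v ∨ v ≤ u := ⟨fun _ _ => Or.symm⟩
    exact (h.pairwise.imp fun huv => Or.inl huv.le).forall
  refine ⟨⟨fun z hz => h.mem_Icc (List.mem_toFinset.mp hz), fun u hu v hv =>
    hcomp u (List.mem_toFinset.mp hu) v (List.mem_toFinset.mp hv)⟩, fun C hC hLC => ?_⟩
  refine Finset.Subset.antisymm (fun w hw => List.mem_toFinset.mpr ?_) hLC
  refine h.mem_of_forall_comparable_s3 (hC.1 hw) fun z hz => ?_
  obtain rfl | hwz := eq_or_ne w z
  · exact Or.inl le_rfl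
  · exact hC.2 w hw z (hLC (List.mem_toFinset.mpr hz)) hwz

end IsCoverChain

theorem IsMaxChainFinsetIn.exists_isCoverChain [DecidableEq α] {c d : α} {C : Finset α}
    (hcd : c ≤ d) (hC : IsMaxChainFinsetIn (· ≤ ·) (Icc c d) C) :
    ∃ L, IsCoverChain c d L ∧ L.toFinset = C := by
  obtain ⟨L, hL, rfl⟩ := Finset.exists_list_pairwise_lt_of_isChain fun u hu v hv huv =>
    hC.1.2 u hu v hv huv
  have hIcc : ∀ z ∈ L, z ∈ Icc c d := fun z hz => hC.1.1 (List.mem_toFinset.mpr hz)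
  have hmem : ∀ {w}, w ∈ Icc c d → (∀ z ∈ L, w ≤ z ∨ z ≤ w) → w ∈ L := fun hw hcomp =>
    List.mem_toFinset.mp (hC.mem_of_forall_comparable_s3 hw fun z hz =>
      hcomp z (List.mem_toFinset.mp hz))
  refine ⟨L, ⟨?_, ?_, ?_⟩, rfl⟩
  · exact hL.head?_eq_of_forall_le (hmem ⟨le_rfl, hcd⟩ fun z hz => Or.inl (hIcc z hz).1)
      fun z hz => (hIcc z hz).1
  · exact hL.getLast?_eq_of_forall_le (hmem ⟨hcd, le_rfl⟩ fun z hz => Or.inr (hIcc z hz).2)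
      fun z hz => (hIcc z hz).2
  · refine List.isChain_iff_forall_rel_of_append_cons_cons.mpr fun x y l₁ l₂ hdec => ?_
    have hxy : x < y := by
      subst hdec
      exact List.rel_of_pairwise_cons (List.pairwise_append.mp hL).2.1 List.mem_cons_self
    refine ⟨hxy, fun w hxw hwy => ?_⟩
    have hw : w ∈ L := hmem ⟨(hIcc x (by simp [hdec])).1.trans hxw.le,
        hwy.le.trans (hIcc y (by simp [hdec])).2⟩ fun z hz =>
      (hL.le_or_le_of_eq_append_cons_cons hdec hz).symm.imp (hwy.le.trans ·) (·.trans hxw.le)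
    rcases hL.le_or_le_of_eq_append_cons_cons hdec hw with h | h
    · exact h.not_gt hxw
    · exact h.not_gt hwy

end CoverChain

section Hypotheses

variable [PartialOrder α] {c d : α}

theorem orderInterval_univ : orderInterval (· ≤ ·) (univ : Set α) c d = Icc c d := by
  ext; simp [orderInterval]

theorem covRelIn_Icc_iff {u v : α} (hu : u ∈ Icc c d) (hv : v ∈ Icc c d) :
    CovRelIn (· ≤ ·) (Icc c d) u v ↔ u ⋖ v := by
  rw [covBy_iff_lt_and_eq_or_eq, lt_iff_le_and_ne]
  constructor
  · rintro ⟨-, -, hle, hne, h⟩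
    exact ⟨⟨hle, hne⟩, fun w huw hwv => h w ⟨hu.1.trans huw, hwv.trans hv.2⟩ huw hwv⟩
  · rintro ⟨⟨hle, hne⟩, h⟩
    exact ⟨hu, hv, hle, hne, fun w _ => h w⟩

theorem isMaxChainListIn_univ_iff {L : List α} :
    IsMaxChainListIn (· ≤ ·) univ c d L ↔ IsCoverChain c d L := by
  simp only [IsMaxChainListIn, orderInterval_univ]
  constructor
  · rintro ⟨hmem, hch, hh, hl⟩
    exact ⟨hh, hl, (List.IsChain.iff_of_mem_imp fun u v hu hv =>
      covRelIn_Icc_iff (hmem u hu) (hmem v hv)).mp hch⟩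
  · intro h
    exact ⟨fun z => h.mem_Icc, (List.IsChain.iff_of_mem_imp fun u v hu hv =>
      covRelIn_Icc_iff (h.mem_Icc hu) (h.mem_Icc hv)).mpr h.isChain, h.head?_eq, h.getLast?_eq⟩

theorem IsGradedIn.length_eq (hgr : IsGradedIn (· ≤ ·) (univ : Set α)) {L₁ L₂ : List α}
    (h₁ : IsCoverChain c d L₁) (h₂ : IsCoverChain c d L₂) : L₁.length = L₂.length := by
  classical
  have := hgr c trivial d trivial h₁.le L₁.toFinset L₂.toFinset
  rw [orderInterval_univ] at this
  have := this h₁.isMaxChainFinsetIn h₂.isMaxChainFinsetIn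
  rwa [List.toFinset_card_of_nodup h₁.nodup, List.toFinset_card_of_nodup h₂.nodup] at this

end Hypotheses

section Labels

variable {Λ : Type*} (f : α → α → Λ)

@[simp] theorem labelSeq_nil : labelSeq f [] = [] := rfl

@[simp] theorem labelSeq_singleton (x : α) : labelSeq f [x] = [] := rfl

@[simp] theorem labelSeq_cons_cons (x y : α) (L : List α) :
    labelSeq f (x :: y :: L) = f x y :: labelSeq f (y :: L) := rfl

theorem labelSeq_cons_of_head?_eq {x y : α} {L : List α} (h : L.head? = some y) :
    labelSeq f (x :: L) = f x y :: labelSeq f L := by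
  obtain ⟨T, rfl⟩ := List.head?_eq_some_iff.mp h
  rfl

@[simp] theorem length_labelSeq (L : List α) : (labelSeq f L).length = L.length - 1 := by
  simp [labelSeq]

theorem labelSeq_append (A : List α) (x : α) (B : List α) :
    labelSeq f (A ++ x :: B) = labelSeq f (A ++ [x]) ++ labelSeq f (x :: B) := by
  induction A with
  | nil => simp
  | cons a A ih =>
    cases A with
    | nil => simp
    | cons a' A => simp_all

theorem labelSeq_append_cons_cons (A : List α) (u x : α) (B : List α) :
    labelSeq f (A ++ u :: x :: B) = labelSeq f (A ++ [u, x]) ++ labelSeq f (x :: B) := by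
  simpa using labelSeq_append f (A ++ [u]) x B

variable [LinearOrder Λ] {f}

theorem exists_first_labelSeq_descent :
    ∀ {M : List α}, ¬ (labelSeq f M).IsChain (· ≤ ·) →
      ∃ P u x v S, M = P ++ u :: x :: v :: S ∧ f x v < f u x ∧
        (labelSeq f (P ++ [u, x])).IsChain (· ≤ ·)
  | [] | [_] | [_, _] => by simp
  | m₀ :: m₁ :: m₂ :: T => by
    intro h
    by_cases h₀ : f m₀ m₁ ≤ f m₁ m₂
    · obtain ⟨P, u, x, v, S, hM, hdesc, hpre⟩ := exists_first_labelSeq_descent (M := m₁ :: m₂ :: T)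
        fun hc => h (by simpa [List.isChain_cons_cons, h₀] using hc)
      refine ⟨m₀ :: P, u, x, v, S, by rw [hM]; rfl, hdesc, ?_⟩
      have hhead : (P ++ [u, x]).head? = some m₁ := by
        simpa [List.head?_append] using congrArg List.head? hM.symm
      rw [List.cons_append, labelSeq_cons_of_head?_eq f hhead, List.isChain_cons]
      refine ⟨fun y hy => ?_, hpre⟩
      have := congrArg List.head? (hM ▸ labelSeq_append_cons_cons f P u x (v :: S))
      simp only [labelSeq_cons_cons, List.head?_cons, List.head?_append, Option.mem_def.mp hy,
        Option.some_or, Option.some.injEq] at this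
      exact this ▸ h₀
    · exact ⟨[], m₀, m₁, m₂, T, rfl, not_le.mp h₀, by simp⟩

theorem labelSeq_lt_of_exchange {P S : List α} {u x v z : α}
    (h : [f u z, f z v] < [f u x, f x v]) :
    labelSeq f (P ++ u :: z :: v :: S) < labelSeq f (P ++ u :: x :: v :: S) := by
  rw [labelSeq_append, labelSeq_append f P u (x :: v :: S)]
  exact List.append_left_lt (List.lt_append_of_lt_of_length_eq h rfl _ _)

end Labels

namespace IsELShellingIn

variable [PartialOrder α] {Λ : Type*} [LinearOrder Λ] {f : α → α → Λ}
  (hf : IsELShellingIn (· ≤ ·) (univ : Set α) f) {c d : α}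
include hf

theorem exists_increasing (hcd : c ≤ d) :
    ∃ L, IsCoverChain c d L ∧ (labelSeq f L).IsChain (· ≤ ·) := by
  obtain ⟨L, hL, hinc, -⟩ := hf c trivial d trivial hcd
  exact ⟨L, isMaxChainListIn_univ_iff.mp hL, hinc⟩

theorem labelSeq_lt_of_increasing {Z W : List α} (hZ : IsCoverChain c d Z)
    (hinc : (labelSeq f Z).IsChain (· ≤ ·)) (hW : IsCoverChain c d W) (hne : W ≠ Z) :
    labelSeq f Z < labelSeq f W := by
  obtain ⟨L₀, -, -, huniq, hlt⟩ := hf c trivial d trivial hZ.le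
  obtain rfl := huniq Z (isMaxChainListIn_univ_iff.mpr hZ) hinc
  exact hlt W (isMaxChainListIn_univ_iff.mpr hW) hne

theorem exists_exchange (hgr : IsGradedIn (· ≤ ·) (univ : Set α)) {u x v : α} (hux : u ⋖ x)
    (hxv : x ⋖ v) (hdesc : f x v < f u x) :
    ∃ z, u ⋖ z ∧ z ⋖ v ∧ [f u z, f z v] < [f u x, f x v] := by
  have hchain : IsCoverChain u v [u, x, v] := ⟨rfl, rfl, by simp [hux, hxv]⟩
  obtain ⟨L₀, hL₀, hinc⟩ := hf.exists_increasing (hux.le.trans hxv.le)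
  have hlen : L₀.length = 3 := hgr.length_eq hL₀ hchain
  obtain ⟨z, rfl⟩ : ∃ z, L₀ = [u, z, v] := by
    rcases L₀ with _ | ⟨e₁, _ | ⟨z, _ | ⟨e₃, _ | _⟩⟩⟩ <;> simp at hlen
    obtain rfl : e₁ = u := by simpa using hL₀.head?_eq
    obtain rfl : e₃ = v := by simpa using hL₀.getLast?_eq
    exact ⟨z, rfl⟩
  have hne : [u, x, v] ≠ [u, z, v] := by
    intro h
    simp only [labelSeq_cons_cons, labelSeq_singleton, List.isChain_pair] at hinc
    simp only [List.cons.injEq] at h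
    exact hdesc.not_ge (h.2.1 ▸ hinc)
  obtain ⟨huz, hzv⟩ : u ⋖ z ∧ z ⋖ v := by simpa using hL₀.isChain
  exact ⟨z, huz, hzv, hf.labelSeq_lt_of_increasing hL₀ hinc hchain hne⟩

theorem exists_descent_not_mem_of_getElem?_one_ne (hgr : IsGradedIn (· ≤ ·) (univ : Set α))
    {L₁ L₂ : List α} (h₁ : IsCoverChain c d L₁) (h₂ : IsCoverChain c d L₂)
    (hsecond : L₁[1]? ≠ L₂[1]?) (hlabels : ¬ labelSeq f L₂ < labelSeq f L₁) :
    ∃ P u x v S, L₂ = P ++ u :: x :: v :: S ∧ f x v < f u x ∧ x ∉ L₁ := by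
  have hinc₂ : ¬ (labelSeq f L₂).IsChain (· ≤ ·) := fun hinc =>
    hlabels (hf.labelSeq_lt_of_increasing h₂ hinc h₁ (by rintro rfl; exact hsecond rfl))
  obtain ⟨P, u, x, v, S, rfl, hdesc, hpre⟩ := exists_first_labelSeq_descent hinc₂
  refine ⟨P, u, x, v, S, rfl, hdesc, fun hx => ?_⟩
  obtain ⟨A, B, rfl⟩ := List.append_of_mem hx
  have hsplit₂ : P ++ u :: x :: v :: S = (P ++ [u, x]) ++ v :: S := by simp
  have hZ : IsCoverChain c x (P ++ [u, x]) := by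
    simpa using (show IsCoverChain c d ((P ++ [u]) ++ x :: v :: S) by simpa).left_of_append_cons
  have hW : IsCoverChain c x (A ++ [x]) := h₁.left_of_append_cons
  have hne : A ++ [x] ≠ P ++ [u, x] := by
    intro heq
    apply hsecond
    rw [show A ++ x :: B = (A ++ [x]) ++ B by simp, heq, hsplit₂,
      List.getElem?_append_left (l₁ := P ++ [u, x]) (by simp),
      List.getElem?_append_left (l₁ := P ++ [u, x]) (by simp)]
  have hlen : (labelSeq f (P ++ [u, x])).length = (labelSeq f (A ++ [x])).length := by
    simp only [length_labelSeq, hgr.length_eq hZ hW]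
  apply hlabels
  rw [labelSeq_append_cons_cons, labelSeq_append f A]
  exact List.lt_append_of_lt_of_length_eq (hf.labelSeq_lt_of_increasing hZ hpre hW hne) hlen _ _

theorem exists_descent_not_mem (hgr : IsGradedIn (· ≤ ·) (univ : Set α)) {L₁ L₂ : List α}
    (h₁ : IsCoverChain c d L₁) (h₂ : IsCoverChain c d L₂) (hne : L₁ ≠ L₂)
    (hlabels : ¬ labelSeq f L₂ < labelSeq f L₁) :
    ∃ P u x v S, L₂ = P ++ u :: x :: v :: S ∧ f x v < f u x ∧ x ∉ L₁ := by
  induction L₂ generalizing c L₁ with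
  | nil => exact absurd h₂.head?_eq (by simp)
  | cons c' T₂ ih =>
  obtain rfl : c' = c := by simpa using h₂.head?_eq
  obtain ⟨T₁, rfl⟩ := List.head?_eq_some_iff.mp h₁.head?_eq
  rcases T₂ with _ | ⟨y₂, T₂⟩
  · obtain rfl : c' = d := by simpa using h₂.getLast?_eq
    exact absurd h₁.eq_singleton hne
  rcases T₁ with _ | ⟨y₁, T₁⟩
  · obtain rfl : c' = d := by simpa using h₁.getLast?_eq
    exact absurd h₂.eq_singleton.symm hne
  obtain rfl | hy := eq_or_ne y₁ y₂
  · obtain ⟨P, u, x, v, S, hdec, hdesc, hx⟩ :=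
      ih h₁.tail h₂.tail (by simpa using hne) fun h => hlabels (List.Lex.cons h)
    refine ⟨c' :: P, u, x, v, S, by rw [hdec]; rfl, hdesc, ?_⟩
    have hcx : c' < x := List.rel_of_pairwise_cons h₂.pairwise (by simp [hdec])
    simpa [hcx.ne'] using hx
  · exact hf.exists_descent_not_mem_of_getElem?_one_ne hgr h₁ h₂ (by simpa using hy) hlabels

end IsELShellingIn

theorem isShellingOrder_of_isStrictTotalOrder [DecidableEq α] {le : α → α → Prop} {S : Set α}
    {r : Finset α → Finset α → Prop} [IsStrictTotalOrder (Finset α) r]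
    (h : ∀ m₁ m₂, IsMaxChainFinsetIn le S m₁ → IsMaxChainFinsetIn le S m₂ → r m₁ m₂ →
      ∃ m₃, IsMaxChainFinsetIn le S m₃ ∧ r m₃ m₂ ∧
        ∃ x ∈ m₂, m₁ ∩ m₂ ⊆ m₃ ∩ m₂ ∧ m₃ ∩ m₂ = m₂.erase x) :
    IsShellingOrder le S r := by
  refine ⟨fun C _ => irrefl C, fun _ _ _ _ _ _ => _root_.trans, fun C D _ _ hne => ?_, h⟩
  rcases trichotomous_of r C D with h | rfl | h
  exacts [Or.inl h, absurd rfl hne, Or.inr h]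

section Shelling

variable [PartialOrder α] [DecidableEq α] {Λ : Type*} [LinearOrder Λ]

/-- Junk unless `C` is the underlying set of a saturated chain from `a` to `b`. -/
noncomputable def coverChainOf (a b : α) (C : Finset α) : List α :=
  Classical.epsilon fun L => IsCoverChain a b L ∧ L.toFinset = C

theorem IsCoverChain.coverChainOf_toFinset {a b : α} {L : List α} (h : IsCoverChain a b L) :
    coverChainOf a b L.toFinset = L :=
  have h' := Classical.epsilon_spec (p := fun M => IsCoverChain a b M ∧ M.toFinset = L.toFinset)
    ⟨L, h, rfl⟩
  h'.1.eq_of_toFinset_eq h h'.2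

def lexShellingRel (f : α → α → Λ) (a b : α) : Finset α → Finset α → Prop :=
  InvImage (Prod.Lex (· < ·) WellOrderingRel) fun C => (labelSeq f (coverChainOf a b C), C)

instance (f : α → α → Λ) (a b : α) : IsStrictTotalOrder (Finset α) (lexShellingRel f a b) where
  toTrichotomous := InvImage.trichotomous fun _ _ h => (Prod.ext_iff.mp h).2
  toIsStrictOrder := by unfold lexShellingRel; exact {}

end Shelling

theorem IsELShellingIn.lexShellingRel_shelling [PartialOrder α] [DecidableEq α] {Λ : Type*}
    [LinearOrder Λ] {f : α → α → Λ} (hf : IsELShellingIn (· ≤ ·) (univ : Set α) f)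
    (hgr : IsGradedIn (· ≤ ·) (univ : Set α)) {a b : α} (hab : a ≤ b) {m₁ m₂ : Finset α}
    (hm₁ : IsMaxChainFinsetIn (· ≤ ·) (Icc a b) m₁)
    (hm₂ : IsMaxChainFinsetIn (· ≤ ·) (Icc a b) m₂) (h : lexShellingRel f a b m₁ m₂) :
    ∃ m₃, IsMaxChainFinsetIn (· ≤ ·) (Icc a b) m₃ ∧ lexShellingRel f a b m₃ m₂ ∧
      ∃ x ∈ m₂, m₁ ∩ m₂ ⊆ m₃ ∩ m₂ ∧ m₃ ∩ m₂ = m₂.erase x := by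
  obtain ⟨L₁, h₁, rfl⟩ := hm₁.exists_isCoverChain hab
  obtain ⟨L₂, h₂, rfl⟩ := hm₂.exists_isCoverChain hab
  have hne : L₁ ≠ L₂ := by rintro rfl; exact irrefl _ h
  have hlabels : ¬ labelSeq f L₂ < labelSeq f L₁ := by
    simp only [lexShellingRel, InvImage, h₁.coverChainOf_toFinset, h₂.coverChainOf_toFinset,
      Prod.lex_def] at h
    rcases h with h | ⟨h, -⟩
    · exact asymm h
    · exact h ▸ lt_irrefl _
  obtain ⟨P, u, x, v, S, rfl, hdesc, hx⟩ := hf.exists_descent_not_mem hgr h₁ h₂ hne hlabels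
  have hux : u ⋖ x := List.isChain_iff_forall_rel_of_append_cons_cons.mp h₂.isChain rfl
  have hxv : x ⋖ v := List.isChain_iff_forall_rel_of_append_cons_cons.mp h₂.isChain
    (l₁ := P ++ [u]) (l₂ := S) (by simp)
  obtain ⟨z, huz, hzv, hlt⟩ := hf.exists_exchange hgr hux hxv hdesc
  have h₃ := h₂.replace huz hzv
  have hxPS : x ∉ (P ++ [u]) ++ v :: S := (List.nodup_cons.mp (List.nodup_middle.mp
    (by simpa using h₂.nodup : ((P ++ [u]) ++ x :: v :: S).Nodup))).1
  have hinter := List.toFinset_inter_eq_erase hxPS (z := z) (by rintro rfl; exact lt_irrefl _ hlt)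
  simp only [List.append_assoc, List.cons_append, List.nil_append] at hinter
  refine ⟨_, h₃.isMaxChainFinsetIn, ?_, x, by simp, ?_, hinter⟩
  · simp only [lexShellingRel, InvImage, h₃.coverChainOf_toFinset, h₂.coverChainOf_toFinset]
    exact Prod.Lex.left _ _ (labelSeq_lt_of_exchange hlt)
  · rw [hinter]
    intro y hy
    rw [Finset.mem_inter] at hy
    exact Finset.mem_erase.mpr ⟨fun hyx => hx (List.mem_toFinset.mp (hyx ▸ hy.1)), hy.2⟩

theorem el_shellable_closed_intervals_shellable_general
    [PartialOrder α] [DecidableEq α]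
    (hgraded : IsGradedIn (· ≤ · : α → α → Prop) Set.univ)
    (hEL : IsELShellableIn (· ≤ · : α → α → Prop) Set.univ)
    (a b : α) (hab : a ≤ b) :
    IsShellableIn (· ≤ · : α → α → Prop) (Set.Icc a b) := by
  obtain ⟨Λ, _, f, hf⟩ := hEL
  exact ⟨lexShellingRel f a b, isShellingOrder_of_isStrictTotalOrder fun _ _ =>
    hf.lexShellingRel_shelling hgraded hab⟩

/-- Let `P` be a finite graded EL-shellable poset.  Then every
closed interval `[a,b]` of `P` is shellable. -/
theorem el_shellable_closed_intervals_shellable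
    [PartialOrder α] [Fintype α] [DecidableEq α]
    (hgraded : IsGradedIn (· ≤ · : α → α → Prop) Set.univ)
    (hEL : IsELShellableIn (· ≤ · : α → α → Prop) Set.univ)
    (a b : α) (hab : a ≤ b) :
    IsShellableIn (· ≤ · : α → α → Prop) (Set.Icc a b) :=
  el_shellable_closed_intervals_shellable_general hgraded hEL a b hab
end

section
/- Let x, y be generators of a grid diagram of size N, and let D, D′ ∈ 𝒟(x,y). Then μ(D) − 2·Σ_i n_{O_i}(D) = μ(D′) − 2·Σ_i n_{O_i}(D′) and Σ_i (n_{X_i}(D) − n_{O_i}(D)) = Σ_i (n_{X_i}(D′) − n_{O_i}(D′)). Hence the relative Maslov grading M(x,y) := μ(D) − 2·Σ_i n_{O_i}(D) and the relative Alexander grading A(x,y) := Σ_i (n_{X_i}(D) − n_{O_i}(D)) do not depend on the choice of D ∈ 𝒟(x,y). -/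
/-- A generator of a grid diagram of size `N`: a permutation of `ℤ/N`. -/
abbrev GridGen (N : ℕ) := Equiv.Perm (ZMod N)

/-- The alternating corner sum of a 2-chain `D` at the lattice point `(a, b)`. -/
def cornerSum (N : ℕ) (D : ZMod N → ZMod N → ℤ) (a b : ZMod N) : ℤ :=
  D a b - D (a - 1) b - D a (b - 1) + D (a - 1) (b - 1)

/-- `D` is a domain from the generator `x` to the generator `y`: the alternating
corner sum at a lattice point `p` is `1` if `p ∈ x \ y`, `-1` if `p ∈ y \ x`, and
`0` otherwise. -/
def IsGridDomain (N : ℕ) (x y : GridGen N) (D : ZMod N → ZMod N → ℤ) : Prop :=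
  ∀ a b : ZMod N, cornerSum N D a b =
    if x a = b ∧ y a ≠ b then 1 else if y a = b ∧ x a ≠ b then -1 else 0

/-- The point measure `n_p(D)` at the lattice point `p = (a, b)`: the average of
the values of `D` on the four squares around `p`. -/
def gridNp (N : ℕ) (D : ZMod N → ZMod N → ℤ) (a b : ZMod N) : ℚ :=
  ((D a b : ℚ) + (D (a - 1) b : ℚ) + (D a (b - 1) : ℚ) + (D (a - 1) (b - 1) : ℚ)) / 4

/-- The Maslov index `μ(D) = Σ_i (n_{(i, x i)}(D) + n_{(i, y i)}(D))`. -/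
def maslovIndex (N : ℕ) [NeZero N] (x y : GridGen N) (D : ZMod N → ZMod N → ℤ) : ℚ :=
  ∑ i : ZMod N, (gridNp N D i (x i) + gridNp N D i (y i))

/-!
The difference `E = D - D'` of two domains from `x` to `y` has vanishing corner sums at every
lattice point, so it is a periodic domain: `E a b = f a + g b`, a combination of full columns and
full rows. Summing such a chain along the graph of any permutation gives `Σ f + Σ g`. Each of
`Σ_i n_{(i, x i)}(E)` and `Σ_i n_{(i, y i)}(E)` averages four such sums (the graphs of `x`, `y`
shifted by one in either coordinate are graphs of permutations again), so `μ(E) = 2 (Σ f + Σ g)`.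
Hence both `μ(E) - 2 Σ_i E(O_i)` and `Σ_i (E(X_i) - E(O_i))` vanish.
-/

open Finset

lemma ZMod.apply_eq_apply_zero_of_sub_one {N : ℕ} [NeZero N] {α : Type*} (c : ZMod N → α)
    (hc : ∀ a, c a = c (a - 1)) (a : ZMod N) : c a = c 0 := by
  have shift : ∀ k : ℕ, c a = c (a - k) := by
    intro k
    induction k with
    | zero => simp
    | succ k ih => rw [ih, hc]; push_cast; ring_nf
  simpa using shift a.val

lemma Equiv.sum_comp_add_comp {α M : Type*} [Fintype α] [AddCommMonoid M]
    (e₁ e₂ : Equiv.Perm α) (f g : α → M) : ∑ i, (f (e₁ i) + g (e₂ i)) = ∑ i, f i + ∑ i, g i := by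
  rw [sum_add_distrib, Equiv.sum_comp e₁ f, Equiv.sum_comp e₂ g]

section GridChains

variable {N : ℕ}

lemma cornerSum_sub (D D' : ZMod N → ZMod N → ℤ) (a b : ZMod N) :
    cornerSum N (D - D') a b = cornerSum N D a b - cornerSum N D' a b := by
  simp only [cornerSum, Pi.sub_apply]
  ring

lemma IsGridDomain.cornerSum_sub_eq_zero {x y : GridGen N} {D D' : ZMod N → ZMod N → ℤ}
    (hD : IsGridDomain N x y D) (hD' : IsGridDomain N x y D') (a b : ZMod N) :
    cornerSum N (D - D') a b = 0 := by
  rw [cornerSum_sub, hD, hD', sub_self]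

lemma exists_eq_add_of_cornerSum_eq_zero [NeZero N] {E : ZMod N → ZMod N → ℤ}
    (hE : ∀ a b, cornerSum N E a b = 0) :
    ∃ f g : ZMod N → ℤ, ∀ a b, E a b = f a + g b := by
  have column_step : ∀ a b, E a b - E a (b - 1) = E 0 b - E 0 (b - 1) := fun a b =>
    ZMod.apply_eq_apply_zero_of_sub_one (fun a => E a b - E a (b - 1))
      (fun a => by have := hE a b; simp only [cornerSum] at this; linarith) a
  have row_offset : ∀ a b, E a b - E 0 b = E a 0 - E 0 0 := fun a =>
    ZMod.apply_eq_apply_zero_of_sub_one (fun b => E a b - E 0 b)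
      (fun b => by have := column_step a b; linarith)
  exact ⟨fun a => E a 0 - E 0 0, fun b => E 0 b, fun a b => by linarith [row_offset a b]⟩

variable [NeZero N]

lemma sum_gridNp_of_eq_add {E : ZMod N → ZMod N → ℤ} {f g : ZMod N → ℤ}
    (hE : ∀ a b, E a b = f a + g b) (σ : GridGen N) :
    ∑ i, gridNp N E i (σ i) = ∑ i, (f i : ℚ) + ∑ i, (g i : ℚ) := by
  let shift : Equiv.Perm (ZMod N) := Equiv.subRight 1
  have corner : ∀ e₁ e₂ : Equiv.Perm (ZMod N),
      ∑ i, (E (e₁ i) (e₂ i) : ℚ) = ∑ i, (f i : ℚ) + ∑ i, (g i : ℚ) := fun e₁ e₂ => by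
    simp only [hE, Int.cast_add]
    exact Equiv.sum_comp_add_comp e₁ e₂ (fun i => (f i : ℚ)) (fun i => (g i : ℚ))
  have h₁ := corner 1 σ
  have h₂ := corner shift σ
  have h₃ := corner 1 (σ.trans shift)
  have h₄ := corner shift (σ.trans shift)
  simp only [gridNp, ← sum_div, sum_add_distrib]
  simp only [shift, Equiv.Perm.coe_one, id, Equiv.trans_apply, Equiv.subRight_apply] at h₁ h₂ h₃ h₄
  rw [h₁, h₂, h₃, h₄]
  ring

lemma maslovIndex_of_eq_add {E : ZMod N → ZMod N → ℤ} {f g : ZMod N → ℤ}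
    (hE : ∀ a b, E a b = f a + g b) (x y : GridGen N) :
    maslovIndex N x y E = 2 * (∑ i, (f i : ℚ) + ∑ i, (g i : ℚ)) := by
  rw [maslovIndex, sum_add_distrib, sum_gridNp_of_eq_add hE, sum_gridNp_of_eq_add hE]
  ring

lemma maslovIndex_sub (x y : GridGen N) (D D' : ZMod N → ZMod N → ℤ) :
    maslovIndex N x y (D - D') = maslovIndex N x y D - maslovIndex N x y D' := by
  simp only [maslovIndex, gridNp, Pi.sub_apply, Int.cast_sub, ← sum_sub_distrib]
  exact sum_congr rfl fun _ _ => by ring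

end GridChains

theorem relative_gradings_well_defined_general (N : ℕ) [NeZero N]
    (σO σX : GridGen N)
    (x y : GridGen N) (D D' : ZMod N → ZMod N → ℤ)
    (hD : IsGridDomain N x y D) (hD' : IsGridDomain N x y D') :
    maslovIndex N x y D - 2 * ∑ i : ZMod N, (D i (σO i) : ℚ) =
        maslovIndex N x y D' - 2 * ∑ i : ZMod N, (D' i (σO i) : ℚ) ∧
      (∑ i : ZMod N, (D i (σX i) - D i (σO i))) =
        ∑ i : ZMod N, (D' i (σX i) - D' i (σO i)) := by
  obtain ⟨f, g, hE⟩ := exists_eq_add_of_cornerSum_eq_zero (hD.cornerSum_sub_eq_zero hD')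
  have sum_along (σ : GridGen N) :
      ∑ i, D i (σ i) = ∑ i, D' i (σ i) + (∑ i, f i + ∑ i, g i) := by
    rw [← Equiv.sum_comp_add_comp 1 σ, ← sum_add_distrib]
    refine sum_congr rfl fun i _ => ?_
    have := hE i (σ i)
    simp only [Pi.sub_apply] at this
    simp only [Equiv.Perm.coe_one, id]
    linarith
  have maslov := maslovIndex_of_eq_add hE x y
  rw [maslovIndex_sub] at maslov
  have sumO := congrArg (Int.cast : ℤ → ℚ) (sum_along σO)
  push_cast at sumO
  refine ⟨by linarith, ?_⟩
  rw [sum_sub_distrib, sum_sub_distrib, sum_along σX, sum_along σO]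
  ring

/-- For any two domains `D, D' ∈ 𝒟(x,y)` of a grid diagram,
`μ(D) − 2·Σᵢ n_{Oᵢ}(D) = μ(D') − 2·Σᵢ n_{Oᵢ}(D')` and
`Σᵢ (n_{Xᵢ}(D) − n_{Oᵢ}(D)) = Σᵢ (n_{Xᵢ}(D') − n_{Oᵢ}(D'))`; hence the relative
Maslov and Alexander gradings are independent of the choice of domain. -/
theorem relative_gradings_well_defined (N : ℕ) [NeZero N] (hN : 2 ≤ N)
    (σO σX : GridGen N) (hσ : ∀ i : ZMod N, σO i ≠ σX i)
    (x y : GridGen N) (D D' : ZMod N → ZMod N → ℤ)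
    (hD : IsGridDomain N x y D) (hD' : IsGridDomain N x y D') :
    maslovIndex N x y D - 2 * ∑ i : ZMod N, (D i (σO i) : ℚ) =
        maslovIndex N x y D' - 2 * ∑ i : ZMod N, (D' i (σO i) : ℚ) ∧
      (∑ i : ZMod N, (D i (σX i) - D i (σO i))) =
        ∑ i : ZMod N, (D' i (σX i) - D' i (σO i)) :=
  relative_gradings_well_defined_general N σO σX x y D D' hD hD'
end

section
/- For every generator x of a grid diagram of size N, M(x) is an integer. Moreover M is invariant under cyclic translation of the diagram: for every (s,t) ∈ (ℤ/N)², if σ′_O(i) = σ_O(i − s) + t, σ′_X(i) = σ_X(i − s) + t, and x′(i) = x(i − s) + t denote the translated diagram and generator, then the value of M for x′ computed in the diagram (σ′_O, σ′_X) equals the value of M for x computed in (σ_O, σ_X). -/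
/-- `J(a, b) = 1/2` if `(a₁ - b₁)(a₂ - b₂) > 0` and `0` otherwise. -/
noncomputable def Jpt (p q : ℝ × ℝ) : ℚ :=
  if 0 < (p.1 - q.1) * (p.2 - q.2) then 1 / 2 else 0

/-- The planar point corresponding to a coordinate `(i, b)` of a generator,
representing `ℤ/N` by `{0, 1, …, N-1} ⊂ ℝ`. -/
noncomputable def genPt (N : ℕ) (i b : ZMod N) : ℝ × ℝ :=
  ((ZMod.val i : ℝ), (ZMod.val b : ℝ))

/-- The planar point of the marking in column `i` determined by the permutation
`σ`: the centre `(i + 1/2, σ i + 1/2)` of the square `(i, σ i)`. -/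
noncomputable def markPt (N : ℕ) (σ : GridGen N) (i : ZMod N) : ℝ × ℝ :=
  ((ZMod.val i : ℝ) + 1 / 2, (ZMod.val (σ i) : ℝ) + 1 / 2)

/-- The absolute Maslov grading `M(x) = J(x - 𝕆, x - 𝕆) + 1`, with `J` extended
bilinearly to formal sums of points. -/
noncomputable def MaslovGrading (N : ℕ) [NeZero N] (σO : GridGen N) (x : GridGen N) : ℚ :=
  (∑ i : ZMod N, ∑ j : ZMod N,
      (Jpt (genPt N i (x i)) (genPt N j (x j)) - Jpt (genPt N i (x i)) (markPt N σO j) -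
        Jpt (markPt N σO i) (genPt N j (x j)) + Jpt (markPt N σO i) (markPt N σO j))) + 1

/-- The absolute Alexander grading
`A(x) = J(x - (𝕏 + 𝕆)/2, 𝕏 - 𝕆) - (N - 1)/2`, with `J` extended bilinearly to
formal sums of points. -/
noncomputable def AlexGrading (N : ℕ) [NeZero N] (σO σX : GridGen N) (x : GridGen N) : ℚ :=
  (∑ i : ZMod N, ∑ j : ZMod N,
      (Jpt (genPt N i (x i)) (markPt N σX j) - Jpt (genPt N i (x i)) (markPt N σO j) -
        (1 / 2) * Jpt (markPt N σX i) (markPt N σX j) +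
        (1 / 2) * Jpt (markPt N σX i) (markPt N σO j) -
        (1 / 2) * Jpt (markPt N σO i) (markPt N σX j) +
        (1 / 2) * Jpt (markPt N σO i) (markPt N σO j))) - ((N : ℚ) - 1) / 2


/-! `M(x) - 1 = J(x - 𝕆, x - 𝕆)` is a double sum of values in `{0, 1/2}` that is symmetric and
vanishes on the diagonal, hence an integer.

For invariance it suffices to shift up by one row: reflecting in the diagonal replaces `σ_O`, `x`
by their inverses, preserves `J`, and turns horizontal shifts into vertical ones. Up to a
translation of the plane, shifting up by one row moves the `O`-marking and then the generator
point of the top row from above all other points to below all of them. Moving a point `p` of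
weight `w` this way changes `J(A, A)` by `w · ∑_q w_q sgn(q₁ - p₁)`, and for `A = x - 𝕆` this
column sum is `-1` at every abscissa of `A`, since column `i` carries a generator at `i` and a
marking at `i + 1/2`. The two moves, of weights `-1` and `+1`, cancel. -/

theorem Jpt_comm (p q : ℝ × ℝ) : Jpt p q = Jpt q p := by
  unfold Jpt
  rw [← neg_sub q.1, ← neg_sub q.2, neg_mul_neg]

@[simp]
theorem Jpt_self (p : ℝ × ℝ) : Jpt p p = 0 := by
  simp [Jpt]

theorem Jpt_swap (p q : ℝ × ℝ) : Jpt p.swap q.swap = Jpt p q := by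
  simp only [Jpt, Prod.fst_swap, Prod.snd_swap, mul_comm]

theorem Jpt_add_right (p q v : ℝ × ℝ) : Jpt (p + v) (q + v) = Jpt p q := by
  simp [Jpt]

theorem exists_int_two_mul_Jpt (p q : ℝ × ℝ) : ∃ k : ℤ, 2 * Jpt p q = k := by
  unfold Jpt
  split_ifs
  exacts [⟨1, by norm_num⟩, ⟨0, by norm_num⟩]

theorem Jpt_lower_sub_Jpt_upper {a y y' : ℝ} {q : ℝ × ℝ} (hy : q.2 < y) (hy' : y' < q.2) :
    Jpt (a, y') q - Jpt (a, y) q = (SignType.sign (q.1 - a) : ℚ) / 2 := by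
  have hup : 0 < (a - q.1) * (y - q.2) ↔ q.1 < a := by
    rw [mul_pos_iff_of_pos_right (sub_pos.2 hy), sub_pos]
  have hlow : 0 < (a - q.1) * (y' - q.2) ↔ a < q.1 := by
    rw [← neg_mul_neg, neg_sub, neg_sub, mul_pos_iff_of_pos_right (sub_pos.2 hy'), sub_pos]
  simp only [Jpt, hup, hlow]
  rcases lt_trichotomy q.1 a with h | h | h
  · simp [h, h.not_gt, sign_neg (sub_neg.2 h), neg_div]
  · simp [h]
  · simp [h, h.not_gt, sign_pos (sub_pos.2 h)]

theorem exists_int_sum_sum_of_symm {ι : Type*} [Fintype ι] (F : ι → ι → ℚ)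
    (hsymm : ∀ a b, F a b = F b a) (hdiag : ∀ a, F a a = 0)
    (hint : ∀ a b, ∃ k : ℤ, 2 * F a b = k) :
    ∃ m : ℤ, ∑ a, ∑ b, F a b = m := by
  classical
  choose k hk using hint
  suffices ∀ s : Finset ι, ∃ m : ℤ, ∑ a ∈ s, ∑ b ∈ s, F a b = m from this Finset.univ
  intro s
  induction s using Finset.induction_on with
  | empty => exact ⟨0, by simp⟩
  | insert c s hc ih =>
    obtain ⟨m, hm⟩ := ih
    refine ⟨m + ∑ b ∈ s, k c b, ?_⟩
    have hcol : ∑ a ∈ s, F a c = ∑ b ∈ s, F c b := Finset.sum_congr rfl fun a _ => hsymm a c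
    simp only [Finset.sum_insert hc, Finset.sum_add_distrib, hdiag, hm, hcol]
    push_cast
    rw [← Finset.sum_congr rfl fun b _ => hk c b, ← Finset.mul_sum]
    ring

/-- `J(A, A)` for the formal sum `A = ∑ₐ w a • p a`. -/
noncomputable def Jself {ι : Type*} [Fintype ι] (w : ι → ℤ) (p : ι → ℝ × ℝ) : ℚ :=
  ∑ a, ∑ b, (w a * w b : ℚ) * Jpt (p a) (p b)

section Jself

variable {ι : Type*} [Fintype ι] (w : ι → ℤ) (p : ι → ℝ × ℝ)

theorem exists_int_Jself : ∃ m : ℤ, Jself w p = m := by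
  refine exists_int_sum_sum_of_symm _ (fun a b => by rw [mul_comm (w a : ℚ), Jpt_comm])
    (fun a => by simp) fun a b => ?_
  obtain ⟨k, hk⟩ := exists_int_two_mul_Jpt (p a) (p b)
  exact ⟨w a * w b * k, by push_cast; rw [← hk]; ring⟩

theorem Jself_comp_equiv {κ : Type*} [Fintype κ] (e : κ ≃ ι) :
    Jself (w ∘ e) (p ∘ e) = Jself w p := by
  unfold Jself
  rw [← Equiv.sum_comp e]
  exact Fintype.sum_congr _ _ fun a =>
    Equiv.sum_comp e fun b => (w (e a) * w b : ℚ) * Jpt (p (e a)) (p b)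

theorem Jself_swap : Jself w (Prod.swap ∘ p) = Jself w p := by
  simp only [Jself, Function.comp_apply, Jpt_swap]

theorem Jself_add_const (v : ℝ × ℝ) : Jself w (fun a => p a + v) = Jself w p := by
  simp only [Jself, Jpt_add_right]

/-- Only the pairs containing `t` change, each by `± 1/2` according to the side of `t` on which
the other point lies. -/
theorem Jself_update_top_to_bottom [DecidableEq ι] (t : ι) {y : ℝ}
    (htop : ∀ b ≠ t, (p b).2 < (p t).2) (hbot : ∀ b ≠ t, y < (p b).2) :
    Jself w (Function.update p t ((p t).1, y)) =
      Jself w p + w t * ∑ b, w b * (SignType.sign ((p b).1 - (p t).1) : ℚ) := by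
  set s : ι → ℚ := fun b => w t * w b * (SignType.sign ((p b).1 - (p t).1) : ℚ) / 2
  have hdiff : ∀ a b, (w a * w b : ℚ) * Jpt (Function.update p t ((p t).1, y) a)
      (Function.update p t ((p t).1, y) b) - (w a * w b : ℚ) * Jpt (p a) (p b) =
      (if a = t then s b else 0) + (if b = t then s a else 0) := by
    intro a b
    rcases eq_or_ne a t with rfl | ha <;> rcases eq_or_ne b a with rfl | hb
    · simp [s]
    · simp only [Function.update_self, Function.update_of_ne hb, if_true, if_neg hb, add_zero,
        ← mul_sub, Jpt_lower_sub_Jpt_upper (htop b hb) (hbot b hb), s]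
      ring
    · simp [ha]
    · rcases eq_or_ne b t with rfl | hbt
      · simp only [Function.update_self, Function.update_of_ne ha, if_true, if_neg ha, zero_add,
          ← mul_sub, Jpt_comm _ (p b), Jpt_comm _ ((p b).1, y),
          Jpt_lower_sub_Jpt_upper (htop a ha) (hbot a ha), s]
        ring
      · simp [ha, hbt]
  have hsub : Jself w (Function.update p t ((p t).1, y)) - Jself w p = 2 * ∑ b, s b := by
    simp only [Jself, ← Finset.sum_sub_distrib, hdiff, Finset.sum_add_distrib,
      Finset.sum_ite_irrel, Finset.sum_const_zero, Finset.sum_ite_eq', Finset.mem_univ, if_true]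
    ring
  rw [← sub_eq_iff_eq_add', hsub, Finset.mul_sum, Finset.mul_sum]
  exact Finset.sum_congr rfl fun b _ => by ring

end Jself

def diffWeight {α : Type*} : α ⊕ α → ℤ := Sum.elim 1 (-1)

/-- The formal sum `x - 𝕆` as a family of points: `.inl i` is the generator point in column `i`
(weight `1` under `diffWeight`) and `.inr i` is the marking `O_i` (weight `-1`). -/
noncomputable def gridPoints (N : ℕ) (σ x : GridGen N) : ZMod N ⊕ ZMod N → ℝ × ℝ :=
  Sum.elim (fun i => genPt N i (x i)) (markPt N σ)

section Sink

variable {N : ℕ}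

noncomputable def sinkTopMark (σ x : GridGen N) (d : ZMod N) : ZMod N ⊕ ZMod N → ℝ × ℝ :=
  Function.update (gridPoints N σ x) (.inr d) ((gridPoints N σ x (.inr d)).1, -1 / 2)

noncomputable def sinkTopRow (σ x : GridGen N) (c d : ZMod N) : ZMod N ⊕ ZMod N → ℝ × ℝ :=
  Function.update (sinkTopMark σ x d) (.inl c) ((sinkTopMark σ x d (.inl c)).1, -1)

theorem sinkTopMark_fst (σ x : GridGen N) (d : ZMod N) (b : ZMod N ⊕ ZMod N) :
    (sinkTopMark σ x d b).1 = (gridPoints N σ x b).1 := by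
  rcases eq_or_ne b (.inr d) with rfl | hb <;> simp [sinkTopMark, *]

theorem sinkTopMark_snd (σ x : GridGen N) (d : ZMod N) (b : ZMod N ⊕ ZMod N) :
    (sinkTopMark σ x d b).2 = if b = .inr d then -1 / 2 else (gridPoints N σ x b).2 := by
  rcases eq_or_ne b (.inr d) with rfl | hb <;> simp [sinkTopMark, *]

end Sink

section Grid

variable {N : ℕ} [NeZero N]

theorem ZMod.val_neg_one_add_one : (-1 : ZMod N).val + 1 = N := by
  obtain ⟨n, rfl⟩ := Nat.exists_eq_succ_of_ne_zero (NeZero.ne N)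
  rw [ZMod.val_neg_one]

theorem ZMod.val_add_one_lt_of_ne_neg_one {z : ZMod N} (hz : z ≠ -1) : z.val + 1 < N := by
  refine lt_of_le_of_ne (ZMod.val_lt z) fun h => hz ?_
  rw [eq_neg_iff_add_eq_zero, ← ZMod.natCast_zmod_val z, ← Nat.cast_add_one, h,
    ZMod.natCast_self]

theorem ZMod.val_add_one_of_ne_neg_one {z : ZMod N} (hz : z ≠ -1) :
    (z + 1).val = z.val + 1 := by
  conv_lhs => rw [← ZMod.natCast_zmod_val z]
  rw [← Nat.cast_succ, ZMod.val_natCast_of_lt (ZMod.val_add_one_lt_of_ne_neg_one hz)]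

theorem cast_val_add_one_le (z : ZMod N) : (z.val : ℝ) + 1 ≤ N := by
  exact_mod_cast ZMod.val_lt z

theorem cast_val_add_two_le_of_ne_neg_one {z : ZMod N} (hz : z ≠ -1) :
    (z.val : ℝ) + 2 ≤ N := by
  exact_mod_cast ZMod.val_add_one_lt_of_ne_neg_one hz

theorem cast_val_eq_of_eq_neg_one {z : ZMod N} (hz : z = -1) : (z.val : ℝ) + 1 = N := by
  rw [hz, ← Nat.cast_add_one, ZMod.val_neg_one_add_one]

theorem maslovGrading_eq_Jself (σ x : GridGen N) :
    MaslovGrading N σ x = Jself diffWeight (gridPoints N σ x) + 1 := by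
  simp only [MaslovGrading, Jself, Fintype.sum_sum_type, diffWeight, gridPoints, Sum.elim_inl,
    Sum.elim_inr, Pi.one_apply, Pi.neg_apply, Finset.sum_add_distrib, Finset.sum_sub_distrib]
  push_cast
  simp only [one_mul, neg_one_mul, mul_neg, neg_neg, Finset.sum_neg_distrib]
  ring

theorem sum_diffWeight_mul_sign_gridPoints (σ x : GridGen N) (a : ZMod N ⊕ ZMod N) :
    ∑ b, diffWeight b *
      (SignType.sign ((gridPoints N σ x b).1 - (gridPoints N σ x a).1) : ℚ) = -1 := by
  obtain ⟨k, hu⟩ : ∃ k : ZMod N, (gridPoints N σ x a).1 = k.val ∨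
      (gridPoints N σ x a).1 = k.val + 1 / 2 := by
    rcases a with k | k
    exacts [⟨k, Or.inl rfl⟩, ⟨k, Or.inr rfl⟩]
  generalize (gridPoints N σ x a).1 = u at hu ⊢
  have hcol : ∀ i : ZMod N, (SignType.sign ((i.val : ℝ) - u) : ℚ) -
      SignType.sign ((i.val : ℝ) + 1 / 2 - u) = if i = k then -1 else 0 := by
    intro i
    split_ifs with hik
    · subst hik
      rcases hu with rfl | rfl <;> norm_num
    · rcases ((ZMod.val_injective N).ne hik).lt_or_gt with h | h
      · have h' : (i.val : ℝ) + 1 ≤ k.val := by exact_mod_cast h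
        have h₁ : (i.val : ℝ) - u < 0 := by rcases hu with rfl | rfl <;> linarith
        have h₂ : (i.val : ℝ) + 1 / 2 - u < 0 := by rcases hu with rfl | rfl <;> linarith
        rw [sign_neg h₁, sign_neg h₂, sub_self]
      · have h' : (k.val : ℝ) + 1 ≤ i.val := by exact_mod_cast h
        have h₁ : 0 < (i.val : ℝ) - u := by rcases hu with rfl | rfl <;> linarith
        have h₂ : 0 < (i.val : ℝ) + 1 / 2 - u := by rcases hu with rfl | rfl <;> linarith
        rw [sign_pos h₁, sign_pos h₂, sub_self]
  simp only [Fintype.sum_sum_type, diffWeight, gridPoints, genPt, markPt, Sum.elim_inl,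
    Sum.elim_inr, Pi.one_apply, Pi.neg_apply, Int.cast_one, Int.cast_neg, one_mul, neg_one_mul,
    Finset.sum_neg_distrib, ← sub_eq_add_neg, ← Finset.sum_sub_distrib, hcol]
  simp

theorem gridPoints_inv_comp_sumCongr (σ x : GridGen N) :
    gridPoints N σ⁻¹ x⁻¹ ∘ Equiv.sumCongr x σ = Prod.swap ∘ gridPoints N σ x := by
  funext b
  rcases b with i | i <;> simp [gridPoints, genPt, markPt]

theorem maslovGrading_inv (σ x : GridGen N) :
    MaslovGrading N σ⁻¹ x⁻¹ = MaslovGrading N σ x := by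
  have hweight : diffWeight ∘ Equiv.sumCongr x σ = diffWeight := by
    funext b
    rcases b with i | i <;> rfl
  rw [maslovGrading_eq_Jself, maslovGrading_eq_Jself,
    ← Jself_comp_equiv _ _ (Equiv.sumCongr x σ), hweight, gridPoints_inv_comp_sumCongr,
    Jself_swap]

theorem Jself_sinkTopMark (σ x : GridGen N) {d : ZMod N} (hσd : σ d = -1) :
    Jself diffWeight (sinkTopMark σ x d) = Jself diffWeight (gridPoints N σ x) + 1 := by
  classical
  have hσ : ∀ j ≠ d, σ j ≠ -1 := fun j hj h => hj (σ.injective (h.trans hσd.symm))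
  rw [sinkTopMark, Jself_update_top_to_bottom, sum_diffWeight_mul_sign_gridPoints]
  · simp [diffWeight]
  · rintro (i | j) hb <;> simp only [gridPoints, genPt, markPt, Sum.elim_inl, Sum.elim_inr]
    · linarith [cast_val_add_one_le (x i), cast_val_eq_of_eq_neg_one hσd]
    · linarith [cast_val_add_two_le_of_ne_neg_one (hσ j fun h => hb (h ▸ rfl)),
        cast_val_eq_of_eq_neg_one hσd]
  · rintro (i | j) - <;> simp only [gridPoints, genPt, markPt, Sum.elim_inl, Sum.elim_inr]
    · linarith [(x i).val.cast_nonneg (α := ℝ)]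
    · linarith [(σ j).val.cast_nonneg (α := ℝ)]

theorem Jself_sinkTopRow (σ x : GridGen N) {c d : ZMod N} (hxc : x c = -1)
    (hσd : σ d = -1) :
    Jself diffWeight (sinkTopRow σ x c d) = Jself diffWeight (sinkTopMark σ x d) - 1 := by
  classical
  have hx : ∀ i ≠ c, x i ≠ -1 := fun i hi h => hi (x.injective (h.trans hxc.symm))
  have hσ : ∀ j ≠ d, σ j ≠ -1 := fun j hj h => hj (σ.injective (h.trans hσd.symm))
  rw [sinkTopRow, Jself_update_top_to_bottom]
  · simp_rw [sinkTopMark_fst]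
    rw [sum_diffWeight_mul_sign_gridPoints]
    simp [diffWeight, ← sub_eq_add_neg]
  · rintro (i | j) hb <;> simp only [sinkTopMark_snd, reduceCtorEq, if_false, Sum.inr.injEq]
    · simp only [gridPoints, genPt, Sum.elim_inl]
      linarith [cast_val_add_two_le_of_ne_neg_one (hx i fun h => hb (h ▸ rfl)),
        cast_val_eq_of_eq_neg_one hxc]
    · split_ifs with hj <;> simp only [gridPoints, genPt, markPt, Sum.elim_inl, Sum.elim_inr]
      · linarith [(x c).val.cast_nonneg (α := ℝ)]
      · linarith [cast_val_add_two_le_of_ne_neg_one (hσ j hj), cast_val_eq_of_eq_neg_one hxc]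
  · rintro (i | j) - <;> simp only [sinkTopMark_snd, reduceCtorEq, if_false, Sum.inr.injEq]
    · simp only [gridPoints, genPt, Sum.elim_inl]
      linarith [(x i).val.cast_nonneg (α := ℝ)]
    · split_ifs
      · norm_num
      · simp only [gridPoints, markPt, Sum.elim_inr]
        linarith [(σ j).val.cast_nonneg (α := ℝ)]

theorem gridPoints_trans_addRight_one (σ x : GridGen N) {c d : ZMod N} (hxc : x c = -1)
    (hσd : σ d = -1) :
    gridPoints N (σ.trans (Equiv.addRight 1)) (x.trans (Equiv.addRight 1)) =
      fun b => sinkTopRow σ x c d b + (0, 1) := by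
  have hx : ∀ i ≠ c, x i ≠ -1 := fun i hi h => hi (x.injective (h.trans hxc.symm))
  have hσ : ∀ j ≠ d, σ j ≠ -1 := fun j hj h => hj (σ.injective (h.trans hσd.symm))
  funext b
  rcases b with i | j
  · rcases eq_or_ne i c with rfl | hi
    · simp only [sinkTopRow, Function.update_self, sinkTopMark_fst]
      simp [gridPoints, genPt, hxc]
    · simp only [sinkTopRow, sinkTopMark, Function.update_of_ne (Sum.inl_injective.ne hi),
        Function.update_of_ne Sum.inl_ne_inr, gridPoints, genPt, Sum.elim_inl,
        Equiv.trans_apply, Equiv.coe_addRight, ZMod.val_add_one_of_ne_neg_one (hx i hi),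
        Prod.mk_add_mk, Prod.mk.injEq]
      push_cast
      constructor <;> ring
  · rcases eq_or_ne j d with rfl | hj
    · simp only [sinkTopRow, sinkTopMark, Function.update_of_ne Sum.inr_ne_inl,
        Function.update_self]
      simp [gridPoints, markPt, hσd]
      norm_num
    · simp only [sinkTopRow, sinkTopMark, Function.update_of_ne (Sum.inr_injective.ne hj),
        Function.update_of_ne Sum.inr_ne_inl, gridPoints, markPt, Sum.elim_inr,
        Equiv.trans_apply, Equiv.coe_addRight, ZMod.val_add_one_of_ne_neg_one (hσ j hj),
        Prod.mk_add_mk, Prod.mk.injEq]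
      push_cast
      constructor <;> ring

theorem maslovGrading_trans_addRight_one (σ x : GridGen N) :
    MaslovGrading N (σ.trans (Equiv.addRight 1)) (x.trans (Equiv.addRight 1)) =
      MaslovGrading N σ x := by
  have hxc : x (x⁻¹ (-1)) = -1 := x.apply_symm_apply _
  have hσd : σ (σ⁻¹ (-1)) = -1 := σ.apply_symm_apply _
  rw [maslovGrading_eq_Jself, maslovGrading_eq_Jself,
    gridPoints_trans_addRight_one σ x hxc hσd, Jself_add_const, Jself_sinkTopRow σ x hxc hσd,
    Jself_sinkTopMark σ x hσd]
  ring

theorem maslovGrading_trans_addRight (σ x : GridGen N) (t : ZMod N) :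
    MaslovGrading N (σ.trans (Equiv.addRight t)) (x.trans (Equiv.addRight t)) =
      MaslovGrading N σ x := by
  rw [← ZMod.natCast_zmod_val t]
  induction t.val with
  | zero => simp only [Nat.cast_zero, Equiv.addRight_zero]; rfl
  | succ n ih =>
    have hsucc : ∀ τ : GridGen N, τ.trans (Equiv.addRight ((n + 1 : ℕ) : ZMod N)) =
        (τ.trans (Equiv.addRight (n : ZMod N))).trans (Equiv.addRight 1) := fun τ => by
      ext i
      simp [add_assoc]
    rw [hsucc, hsucc, maslovGrading_trans_addRight_one, ih]

theorem maslovGrading_subRight_trans (σ x : GridGen N) (s : ZMod N) :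
    MaslovGrading N ((Equiv.subRight s).trans σ) ((Equiv.subRight s).trans x) =
      MaslovGrading N σ x := by
  have hinv : ∀ τ : GridGen N,
      ((Equiv.subRight s).trans τ)⁻¹ = τ⁻¹.trans (Equiv.addRight s) := fun τ => by
    ext i
    simp [Equiv.Perm.inv_def]
  rw [← maslovGrading_inv, hinv, hinv, maslovGrading_trans_addRight, maslovGrading_inv]

end Grid

theorem absolute_maslov_integral_and_translation_invariant_general
    (N : ℕ) [NeZero N]
    (σO σX : GridGen N) (x : GridGen N) :
    (∃ m : ℤ, MaslovGrading N σO x = (m : ℚ)) ∧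
      ∀ (s t : ZMod N) (σO' σX' x' : GridGen N),
        (∀ i : ZMod N, σO' i = σO (i - s) + t) →
        (∀ i : ZMod N, σX' i = σX (i - s) + t) →
        (∀ i : ZMod N, x' i = x (i - s) + t) →
        MaslovGrading N σO' x' = MaslovGrading N σO x := by
  refine ⟨?_, fun s t σO' σX' x' hO _ hx => ?_⟩
  · obtain ⟨m, hm⟩ := exists_int_Jself diffWeight (gridPoints N σO x)
    exact ⟨m + 1, by rw [maslovGrading_eq_Jself, hm]; push_cast; rfl⟩
  · obtain rfl : σO' = ((Equiv.subRight s).trans σO).trans (Equiv.addRight t) := Equiv.ext hO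
    obtain rfl : x' = ((Equiv.subRight s).trans x).trans (Equiv.addRight t) := Equiv.ext hx
    rw [maslovGrading_trans_addRight, maslovGrading_subRight_trans]

/-- For every generator `x` of a grid diagram, `M(x)` is an
integer; moreover `M` is invariant under cyclic translation of the diagram. -/
theorem absolute_maslov_integral_and_translation_invariant
    (N : ℕ) [NeZero N] (hN : 2 ≤ N)
    (σO σX : GridGen N) (hσ : ∀ i : ZMod N, σO i ≠ σX i) (x : GridGen N) :
    (∃ m : ℤ, MaslovGrading N σO x = (m : ℚ)) ∧
      ∀ (s t : ZMod N) (σO' σX' x' : GridGen N),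
        (∀ i : ZMod N, σO' i = σO (i - s) + t) →
        (∀ i : ZMod N, σX' i = σX (i - s) + t) →
        (∀ i : ZMod N, x' i = x (i - s) + t) →
        MaslovGrading N σO' x' = MaslovGrading N σO x :=
  absolute_maslov_integral_and_translation_invariant_general N σO σX x
end
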